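/- arXiv:math/0609571 — 5 statements merged into one kernel-verified Lean document; each statement's English description precedes it below -/
import Mathlib

section
/- Let A and B be finite groups whose orders are coprime. Then the holomorph of A × B is isomorphic to the direct product of the holomorphs: Hol(A × B) ≅ Hol(A) × Hol(B). -/
/-- The holomorph of a group `G`: the semidirect product `G ⋊ Aut(G)` with the
natural action of `MulAut G` on `G`. -/
def Hol (G : Type*) [Group G] :=
  SemidirectProduct G (MulAut G) (MonoidHom.id (MulAut G))

instance (G : Type*) [Group G] : Group (Hol G) :=
  inferInstanceAs (Group (SemidirectProduct G (MulAut G) (MonoidHom.id (MulAut G))))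

section aux

variable {A B : Type*} [Group A] [Group B] [Finite A] [Finite B]
lemma hol_aux_snd_eq_one (h : Nat.Coprime (Nat.card A) (Nat.card B)) (φ : MulAut (A × B)) (a : A) : (φ (a, 1)).2 = 1 := by
  have h1 : (φ (a, 1)).2 ^ Nat.card A = 1 := by
    have key : ((a, (1 : B)) : A × B) ^ Nat.card A = 1 := by
      ext <;> simp [pow_card_eq_one']
    calc (φ (a, 1)).2 ^ Nat.card A = ((φ (a, 1)) ^ Nat.card A).2 := rfl
    _ = (φ (((a, 1) : A × B) ^ Nat.card A)).2 := by rw [map_pow]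
    _ = 1 := by rw [key, map_one]; rfl
  have h2 : (φ (a, 1)).2 ^ Nat.card B = 1 := pow_card_eq_one'
  have hd := Nat.dvd_gcd (orderOf_dvd_of_pow_eq_one h1) (orderOf_dvd_of_pow_eq_one h2)
  exact orderOf_eq_one_iff.mp (Nat.dvd_one.mp (h ▸ hd))

lemma hol_aux_fst_eq_one (h : Nat.Coprime (Nat.card A) (Nat.card B)) (φ : MulAut (A × B)) (b : B) : (φ (1, b)).1 = 1 := by
  have h1 : (φ (1, b)).1 ^ Nat.card B = 1 := by
    have key : (((1 : A), b) : A × B) ^ Nat.card B = 1 := by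
      ext <;> simp [pow_card_eq_one']
    calc (φ (1, b)).1 ^ Nat.card B = ((φ (1, b)) ^ Nat.card B).1 := rfl
    _ = (φ ((((1 : A), b) : A × B) ^ Nat.card B)).1 := by rw [map_pow]
    _ = 1 := by rw [key, map_one]; rfl
  have h2 : (φ (1, b)).1 ^ Nat.card A = 1 := pow_card_eq_one'
  have hd := Nat.dvd_gcd (orderOf_dvd_of_pow_eq_one h2) (orderOf_dvd_of_pow_eq_one h1)
  exact orderOf_eq_one_iff.mp (Nat.dvd_one.mp (h ▸ hd))

lemma hol_aux_eq_fst (h : Nat.Coprime (Nat.card A) (Nat.card B)) (φ : MulAut (A × B)) (a : A) :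
    φ (a, 1) = ((φ (a, 1)).1, (1 : B)) :=
  Prod.ext rfl (hol_aux_snd_eq_one h φ a)

lemma hol_aux_eq_snd (h : Nat.Coprime (Nat.card A) (Nat.card B)) (φ : MulAut (A × B)) (b : B) :
    φ (1, b) = ((1 : A), (φ (1, b)).2) :=
  Prod.ext (hol_aux_fst_eq_one h φ b) rfl

lemma hol_aux_decomp (h : Nat.Coprime (Nat.card A) (Nat.card B)) (φ : MulAut (A × B)) (a : A) (b : B) :
    φ (a, b) = ((φ (a, 1)).1, (φ (1, b)).2) := by
  have hab : ((a, b) : A × B) = (a, (1 : B)) * ((1 : A), b) := by simp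
  rw [hab, map_mul, hol_aux_eq_fst h φ a, hol_aux_eq_snd h φ b, Prod.mk_mul_mk,
    mul_one, one_mul]

/-- The first-factor automorphism induced by an automorphism of `A × B`. -/
def holAutA (h : Nat.Coprime (Nat.card A) (Nat.card B)) (φ : MulAut (A × B)) : MulAut A where
  toFun a := (φ (a, 1)).1
  invFun a := (φ⁻¹ (a, 1)).1
  left_inv a := by
    show (φ⁻¹ ((φ (a, 1)).1, 1)).1 = a
    rw [← hol_aux_eq_fst h φ a]
    show (φ.symm (φ (a, 1))).1 = a
    rw [φ.symm_apply_apply]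
  right_inv a := by
    show (φ ((φ⁻¹ (a, 1)).1, 1)).1 = a
    rw [← hol_aux_eq_fst h φ⁻¹ a]
    show (φ (φ.symm (a, 1))).1 = a
    rw [φ.apply_symm_apply]
  map_mul' a a' := by
    show (φ (a * a', 1)).1 = (φ (a, 1)).1 * (φ (a', 1)).1
    rw [show ((a * a' : A), (1 : B)) = (a, (1 : B)) * (a', 1) by simp, map_mul]
    rfl

/-- The second-factor automorphism induced by an automorphism of `A × B`. -/
def holAutB (h : Nat.Coprime (Nat.card A) (Nat.card B)) (φ : MulAut (A × B)) : MulAut B where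
  toFun b := (φ (1, b)).2
  invFun b := (φ⁻¹ (1, b)).2
  left_inv b := by
    show (φ⁻¹ (1, (φ (1, b)).2)).2 = b
    rw [← hol_aux_eq_snd h φ b]
    show (φ.symm (φ (1, b))).2 = b
    rw [φ.symm_apply_apply]
  right_inv b := by
    show (φ (1, (φ⁻¹ (1, b)).2)).2 = b
    rw [← hol_aux_eq_snd h φ⁻¹ b]
    show (φ (φ.symm (1, b))).2 = b
    rw [φ.apply_symm_apply]
  map_mul' b b' := by
    show (φ (1, b * b')).2 = (φ (1, b)).2 * (φ (1, b')).2
    rw [show ((1 : A), (b * b' : B)) = ((1 : A), b) * (1, b') by simp, map_mul]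
    rfl

lemma holAutA_mul (h : Nat.Coprime (Nat.card A) (Nat.card B)) (φ ψ : MulAut (A × B)) :
    holAutA h (φ * ψ) = holAutA h φ * holAutA h ψ := by
  refine MulEquiv.ext fun a => ?_
  show ((φ * ψ) (a, 1)).1 = (φ ((ψ (a, 1)).1, 1)).1
  have h1 : (φ * ψ) (a, 1) = φ (ψ (a, 1)) := rfl
  rw [h1]
  exact congrArg (fun x => (φ x).1) (hol_aux_eq_fst h ψ a)

lemma holAutB_mul (h : Nat.Coprime (Nat.card A) (Nat.card B)) (φ ψ : MulAut (A × B)) :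
    holAutB h (φ * ψ) = holAutB h φ * holAutB h ψ := by
  refine MulEquiv.ext fun b => ?_
  show ((φ * ψ) (1, b)).2 = (φ (1, (ψ (1, b)).2)).2
  have h1 : (φ * ψ) (1, b) = φ (ψ (1, b)) := rfl
  rw [h1]
  exact congrArg (fun x => (φ x).2) (hol_aux_eq_snd h ψ b)

end aux

/-- If `A` and `B` are finite groups of coprime orders, then
`Hol(A × B) ≅ Hol(A) × Hol(B)`. -/
theorem hol_prod_of_coprime (A B : Type*) [Group A] [Group B] [Finite A] [Finite B]
    (h : Nat.Coprime (Nat.card A) (Nat.card B)) :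
    Nonempty (Hol (A × B) ≃* Hol A × Hol B) := by
  refine ⟨{
    toFun := fun x => (⟨x.1.1, holAutA h x.2⟩, ⟨x.1.2, holAutB h x.2⟩),
    invFun := fun p => ⟨(p.1.1, p.2.1), MulEquiv.prodCongr p.1.2 p.2.2⟩,
    left_inv := ?_, right_inv := ?_, map_mul' := ?_ }⟩
  · rintro ⟨⟨a, b⟩, φ⟩
    refine SemidirectProduct.ext rfl ?_
    show MulEquiv.prodCongr (holAutA h φ) (holAutB h φ) = φ
    refine MulEquiv.ext fun x => ?_
    exact (hol_aux_decomp h φ x.1 x.2).symm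
  · rintro ⟨⟨a, σ⟩, ⟨b, τ⟩⟩
    refine Prod.ext (SemidirectProduct.ext rfl ?_) (SemidirectProduct.ext rfl ?_)
    · show holAutA h (MulEquiv.prodCongr σ τ) = σ
      refine MulEquiv.ext fun a' => ?_
      show ((MulEquiv.prodCongr σ τ) (a', 1)).1 = σ a'
      simp [MulEquiv.prodCongr]
    · show holAutB h (MulEquiv.prodCongr σ τ) = τ
      refine MulEquiv.ext fun b' => ?_
      show ((MulEquiv.prodCongr σ τ) (1, b')).2 = τ b'
      simp [MulEquiv.prodCongr]
  · rintro ⟨⟨a, b⟩, φ⟩ ⟨⟨a', b'⟩, ψ⟩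
    refine Prod.ext (SemidirectProduct.ext ?_ ?_) (SemidirectProduct.ext ?_ ?_)
    · show (a * (φ (a', b')).1 : A) = a * (φ (a', 1)).1
      rw [hol_aux_decomp h φ a' b']
    · exact holAutA_mul h φ ψ
    · show (b * (φ (a', b')).2 : B) = b * (φ (1, b')).2
      rw [hol_aux_decomp h φ a' b']
    · exact holAutB_mul h φ ψ
end

section
/- Let p be a prime and n > 1. The holomorph Hol(C_{p^n}) of the cyclic group of order p^n has a normal subgroup N isomorphic to C_p × C_p such that the quotient Hol(C_{p^n})/N is isomorphic to Hol(C_{p^{n-1}}). -/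
theorem Ideal.mul_eq_zero_of_sq_eq_bot {R : Type*} [CommRing R] {I : Ideal R} (hI : I ^ 2 = ⊥)
    {a b : R} (ha : a ∈ I) (hb : b ∈ I) : a * b = 0 := by
  have := Ideal.mul_mem_mul ha hb
  rwa [← sq, hI, Ideal.mem_bot] at this

def unitsMulAutMultiplicative (R : Type*) [Ring R] : Rˣ →* MulAut (Multiplicative R) :=
  (MulAutMultiplicative R).symm.toMonoidHom.comp (DistribMulAction.toAddAut Rˣ R)

theorem unitsMulAutMultiplicative_apply {R : Type*} [Ring R] (u : Rˣ) (x : Multiplicative R) :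
    unitsMulAutMultiplicative R u x = .ofAdd (u * x.toAdd) := rfl

/-- The affine group of `R`: the pair `(a, u)` stands for the map `x ↦ a + u * x`. -/
abbrev AffineGroup (R : Type*) [Ring R] : Type _ :=
  Multiplicative R ⋊[unitsMulAutMultiplicative R] Rˣ

namespace AffineGroup

variable {R S : Type*} [CommRing R] [CommRing S] (f : R →+* S)

def map : AffineGroup R →* AffineGroup S :=
  SemidirectProduct.map (AddMonoidHom.toMultiplicative f.toAddMonoidHom) (Units.map f)
    fun u ↦ by ext x; exact f.map_mul u x

variable {f}

theorem map_surjective (hf : Function.Surjective f)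
    (hu : Function.Surjective (Units.map (f : R →* S))) : Function.Surjective (map f) := by
  rintro ⟨b, v⟩
  obtain ⟨a, rfl⟩ := hf b.toAdd
  obtain ⟨u, rfl⟩ := hu v
  exact ⟨⟨.ofAdd a, u⟩, rfl⟩

theorem mem_ker_map {g : AffineGroup R} :
    g ∈ (map f).ker ↔ g.left.toAdd ∈ RingHom.ker f ∧ (g.right : R) - 1 ∈ RingHom.ker f := by
  simp [map, SemidirectProduct.ext_iff, Units.ext_iff, sub_eq_zero]

/-- The map `(a, u) ↦ (a, u - 1)`: as `ker f` is square-zero, the units `1 + ker f` act trivially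
on `ker f` and multiply like `ker f` adds. -/
def kerMapEquiv (hf : RingHom.ker f ^ 2 = ⊥) :
    (map f).ker ≃* Multiplicative (RingHom.ker f) × Multiplicative (RingHom.ker f) where
  toFun g := (.ofAdd ⟨_, (mem_ker_map.1 g.2).1⟩, .ofAdd ⟨_, (mem_ker_map.1 g.2).2⟩)
  invFun x :=
    ⟨⟨.ofAdd x.1.toAdd, Units.mkOfMulEqOne (1 + x.2.toAdd) (1 - x.2.toAdd) (by
        linear_combination -Ideal.mul_eq_zero_of_sq_eq_bot hf x.2.toAdd.2 x.2.toAdd.2)⟩,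
      mem_ker_map.2 ⟨x.1.toAdd.2, by simp⟩⟩
  left_inv g := by ext <;> simp
  right_inv x := by ext <;> simp
  map_mul' g h := by
    have hg := mem_ker_map.1 g.2
    have hh := mem_ker_map.1 h.2
    ext
    · simp only [Subgroup.coe_mul, SemidirectProduct.mul_left, toAdd_mul,
        unitsMulAutMultiplicative_apply, toAdd_ofAdd, Prod.mk_mul_mk, AddMemClass.mk_add_mk,
        add_right_inj]
      linear_combination Ideal.mul_eq_zero_of_sq_eq_bot hf hg.2 hh.1
    · simp only [Subgroup.coe_mul, SemidirectProduct.mul_right, Units.val_mul, toAdd_ofAdd,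
        Prod.mk_mul_mk, toAdd_mul, AddMemClass.mk_add_mk]
      linear_combination Ideal.mul_eq_zero_of_sq_eq_bot hf hg.2 hh.2

end AffineGroup

namespace ZMod

def mulAutEquivUnits (m : ℕ) : MulAut (Multiplicative (ZMod m)) ≃* (ZMod m)ˣ :=
  (MulAutMultiplicative (ZMod m)).trans (ZMod.AddAutEquivUnits m).toMultiplicative

theorem unitsMulAutMultiplicative_mulAutEquivUnits {m : ℕ} (σ : MulAut (Multiplicative (ZMod m))) :
    unitsMulAutMultiplicative (ZMod m) (mulAutEquivUnits m σ) = σ := by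
  conv_rhs => rw [← (mulAutEquivUnits m).symm_apply_apply σ]
  rfl

def holEquivAffineGroup (m : ℕ) : Hol (Multiplicative (ZMod m)) ≃* AffineGroup (ZMod m) :=
  SemidirectProduct.congr (.refl _) (mulAutEquivUnits m) fun σ ↦ by
    rw [unitsMulAutMultiplicative_mulAutEquivUnits]; rfl

theorem ker_castHom {m k : ℕ} (h : k ∣ m) :
    RingHom.ker (castHom h (ZMod k)) = Ideal.span {(k : ZMod m)} := by
  have hcomp : (castHom h (ZMod k)).comp (Int.castRingHom (ZMod m)) = Int.castRingHom (ZMod k) :=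
    RingHom.ext_int _ _
  rw [← Ideal.map_comap_of_surjective (Int.castRingHom (ZMod m)) intCast_surjective (RingHom.ker _),
    RingHom.comap_ker, hcomp, ker_intCastRingHom, Ideal.map_span, Set.image_singleton,
    eq_intCast, Int.cast_natCast]

theorem card_ker_castHom_mul {m k : ℕ} [NeZero m] (h : k ∣ m) :
    Nat.card (RingHom.ker (castHom h (ZMod k))) * k = m := by
  have := (castHom h (ZMod k)).toAddMonoidHom.ker.card_mul_index
  rwa [AddSubgroup.index_ker, AddMonoidHom.range_eq_top.2 (castHom_surjective h),
    AddSubgroup.card_top, Nat.card_zmod, Nat.card_zmod] at this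

theorem sq_ker_castHom_eq_bot {m k : ℕ} (h : k ∣ m) (hm : m ∣ k ^ 2) :
    RingHom.ker (castHom h (ZMod k)) ^ 2 = ⊥ := by
  rw [ker_castHom, Ideal.span_singleton_pow, Ideal.span_singleton_eq_bot, ← Nat.cast_pow,
    natCast_eq_zero_iff]
  exact hm

end ZMod

/-- For a prime `p` and `n > 1`, the holomorph of the cyclic group `C_{p^n}` has a normal
subgroup `N ≅ C_p × C_p` with `Hol(C_{p^n})/N ≅ Hol(C_{p^{n-1}})`. -/
theorem hol_cyclic_pPow_quotient (p n : ℕ) (hp : p.Prime) (hn : 1 < n) :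
    ∃ (N : Subgroup (Hol (Multiplicative (ZMod (p ^ n))))) (hN : N.Normal),
      Nonempty (N ≃* Multiplicative (ZMod p) × Multiplicative (ZMod p)) ∧
      Nonempty (letI := hN;
        (Hol (Multiplicative (ZMod (p ^ n))) ⧸ N) ≃* Hol (Multiplicative (ZMod (p ^ (n - 1))))) := by
  have := Fact.mk hp
  have : NeZero (p ^ n) := ⟨pow_ne_zero n hp.ne_zero⟩
  have hdvd : p ^ (n - 1) ∣ p ^ n := pow_dvd_pow p (n.sub_le 1)
  let f := ZMod.castHom hdvd (ZMod (p ^ (n - 1)))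
  have hcard : Nat.card (RingHom.ker f) = p := by
    refine Nat.eq_of_mul_eq_mul_right (pow_pos hp.pos (n - 1)) ?_
    rw [ZMod.card_ker_castHom_mul, ← pow_succ', Nat.sub_add_cancel hn.le]
  have hsq : RingHom.ker f ^ 2 = ⊥ :=
    ZMod.sq_ker_castHom_eq_bot hdvd (by rw [← pow_mul]; exact pow_dvd_pow p (by omega))
  let e := ZMod.holEquivAffineGroup (p ^ n)
  let φ := (AffineGroup.map f).comp e.toMonoidHom
  have hφ : Function.Surjective φ :=
    (AffineGroup.map_surjective (ZMod.castHom_surjective hdvd) (ZMod.unitsMap_surjective hdvd)).comp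
      e.surjective
  let eI : RingHom.ker f ≃+ ZMod p := addEquivOfPrimeCardEq hcard (Nat.card_zmod p)
  let eN : φ.ker ≃* (AffineGroup.map f).ker :=
    (MulEquiv.subgroupCongr (MonoidHom.ker_comp_mulEquiv _ e)).trans
      (MulEquiv.subgroupMap e.symm _).symm
  exact ⟨φ.ker, φ.normal_ker,
    ⟨eN.trans <| (AffineGroup.kerMapEquiv hsq).trans <|
      .prodCongr eI.toMultiplicative eI.toMultiplicative⟩,
    ⟨(QuotientGroup.quotientKerEquivOfSurjective φ hφ).trans (ZMod.holEquivAffineGroup _).symm⟩⟩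
end

section
/- For every n ≥ 3, the automorphism group of C_{2^n} × C_2 is isomorphic to the presented group on four generators c, d, e, f with relations c^4 = 1, d^2 = 1, d^{-1} c d = c^{-1}, e^{2^{n-2}} = 1, c^2 e^{2^{n-3}} = 1, [c,e] = 1, [d,e] = 1, f^2 = 1, [c,f] = 1, [d,f] = 1, [e,f] = 1. -/
open scoped commutatorElement

/-- Relators for the presented group on generators `c, d, e, f` (indexed `0, 1, 2, 3`):
`c^4 = 1`, `d^2 = 1`, `d⁻¹cd = c⁻¹`, `e^(2^(n-2)) = 1`, `c^2 e^(2^(n-3)) = 1`,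
`[c,e] = [d,e] = 1`, `f^2 = 1`, `[c,f] = [d,f] = [e,f] = 1`. -/
def autRels (n : ℕ) : Set (FreeGroup (Fin 4)) :=
  let c : FreeGroup (Fin 4) := FreeGroup.of 0
  let d : FreeGroup (Fin 4) := FreeGroup.of 1
  let e : FreeGroup (Fin 4) := FreeGroup.of 2
  let f : FreeGroup (Fin 4) := FreeGroup.of 3
  {c ^ 4, d ^ 2, d⁻¹ * c * d * c, e ^ (2 ^ (n - 2)), c ^ 2 * e ^ (2 ^ (n - 3)),
   ⁅c, e⁆, ⁅d, e⁆, f ^ 2, ⁅c, f⁆, ⁅d, f⁆, ⁅e, f⁆}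

/-!
An automorphism of `A = ℤ/2ⁿ × ℤ/2` is determined by the images of `(1, 0)` and `(0, 1)`. Every
automorphism fixes the `2`-torsion element `(h, 0)`, `h = 2ⁿ⁻¹`, so the `2`-torsion element
`(0, 1)` goes to some `(t h, 1)`, while `(1, 0)` goes to some `(u, a)` with `u` odd. Hence the
automorphisms are exactly the `τ^a D^t μ_u` built from the scalings `μ_u (x, y) = (u x, y)` and the
shears `D (x, y) = (x + h y, y)`, `τ (x, y) = (x, y + x mod 2)`, and `|Aut A| = 4 · 2ⁿ⁻¹`.

Sending `c, d, e, f` to `τ D, D, μ₅, μ₋₁` respects the relations because `(τ D)² = μ_{1+h}` and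
`5 ^ 2ⁿ⁻³ = 1 + h`, and it is onto because `(ℤ/2ⁿ)ˣ = ⟨5⟩ × ⟨-1⟩`. Since `e` and `f` are central,
every element of the presented group is some `e^a f^b c^i d^j` with `a < 2ⁿ⁻²` and `b, i, j < 2`, so
it has at most `2ⁿ⁺¹` elements and the surjection is an isomorphism.

The cyclic factor is written `ZMod (2 ^ (k + 2))`, and `n = m + 3` in the presentation, so that no
truncated subtraction occurs.
-/

open Multiplicative

theorem ZMod.addMonoidHom_ext {n : ℕ} {B : Type*} [AddGroup B] {f g : ZMod n →+ B}
    (h : f 1 = g 1) : f = g :=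
  (AddMonoidHom.cancel_right (f := Int.castAddHom (ZMod n)) ZMod.intCast_surjective).1
    (AddMonoidHom.ext_int (by simpa using h))

theorem ZMod.addMonoidHom_prod_ext {n m : ℕ} {B : Type*} [AddCommGroup B]
    {f g : ZMod n × ZMod m →+ B} (h₁ : f (1, 0) = g (1, 0)) (h₂ : f (0, 1) = g (0, 1)) :
    f = g := by
  rw [← AddMonoidHom.coprod_unique f, ← AddMonoidHom.coprod_unique g,
    ZMod.addMonoidHom_ext (f := f.comp (.inl _ _)) (g := g.comp (.inl _ _)) h₁,
    ZMod.addMonoidHom_ext (f := f.comp (.inr _ _)) (g := g.comp (.inr _ _)) h₂]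

theorem MulAut.multiplicative_zmod_prod_ext {n m : ℕ}
    {g h : MulAut (Multiplicative (ZMod n × ZMod m))}
    (h₁ : g (ofAdd (1, 0)) = h (ofAdd (1, 0))) (h₂ : g (ofAdd (0, 1)) = h (ofAdd (0, 1))) :
    g = h := by
  have := ZMod.addMonoidHom_prod_ext
    (f := (AddEquiv.toMultiplicative.symm g).toAddMonoidHom)
    (g := (AddEquiv.toMultiplicative.symm h).toAddMonoidHom) (congrArg toAdd h₁) (congrArg toAdd h₂)
  exact MulEquiv.ext fun p => congrArg ofAdd (DFunLike.congr_fun this (toAdd p))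

theorem MulAut.multiplicative_prod_ext {M N : Type*} [Add M] [Add N]
    {g h : MulAut (Multiplicative (M × N))} (H : ∀ x y, g (ofAdd (x, y)) = h (ofAdd (x, y))) :
    g = h :=
  MulEquiv.ext fun p => H (toAdd p).1 (toAdd p).2

theorem Subgroup.closure_induction_left_of_isOfFinOrder {G : Type*} [Group G] {s : Set G}
    (hs : ∀ x ∈ s, IsOfFinOrder x) {p : G → Prop} (one : p 1)
    (mul_left : ∀ x ∈ s, ∀ y, p y → p (x * y)) {x : G} (hx : x ∈ closure s) : p x := by
  rw [← mem_toSubmonoid, closure_toSubmonoid_of_isOfFinOrder hs] at hx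
  exact Submonoid.closure_induction_left one (fun x hx y _ => mul_left x hx y) hx

theorem ZMod.eq_zero_or_eq_one (y : ZMod 2) : y = 0 ∨ y = 1 := by
  revert y; decide

namespace AutZModTwoPowProd

variable {k : ℕ}

lemma two_pow_eq_zero : (2 : ZMod (2 ^ (k + 2))) ^ (k + 2) = 0 := by
  exact_mod_cast ZMod.natCast_self (2 ^ (k + 2))

lemma two_pow_succ_ne_zero : (2 ^ (k + 1) : ZMod (2 ^ (k + 2))) ≠ 0 := by
  have : ((2 ^ (k + 1) : ℕ) : ZMod (2 ^ (k + 2))) ≠ 0 := by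
    rw [Ne, ZMod.natCast_eq_zero_iff, Nat.pow_dvd_pow_iff_le_right one_lt_two]
    omega
  exact_mod_cast this

def parity (k : ℕ) : ZMod (2 ^ (k + 2)) →+* ZMod 2 :=
  ZMod.castHom (dvd_pow_self 2 (by omega)) (ZMod 2)

def halfEmb (k : ℕ) : ZMod 2 →+ ZMod (2 ^ (k + 2)) :=
  ZMod.lift 2
    ⟨zmultiplesHom (ZMod (2 ^ (k + 2))) (2 ^ (k + 1)), by simp [← pow_succ', two_pow_eq_zero]⟩

lemma halfEmb_one : halfEmb k 1 = 2 ^ (k + 1) := by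
  rw [halfEmb, ← Int.cast_one, ZMod.lift_coe]
  simp

lemma halfEmb_injective : Function.Injective (halfEmb k) := by
  refine (injective_iff_map_eq_zero _).2 fun y hy => ?_
  obtain rfl | rfl := ZMod.eq_zero_or_eq_one y
  · rfl
  · exact absurd (halfEmb_one ▸ hy) two_pow_succ_ne_zero

lemma halfEmb_add_self (y : ZMod 2) : halfEmb k y + halfEmb k y = 0 := by
  rw [← map_add, CharTwo.add_self_eq_zero, map_zero]

lemma parity_halfEmb (y : ZMod 2) : parity k (halfEmb k y) = 0 := by
  obtain rfl | rfl := ZMod.eq_zero_or_eq_one y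
  · simp
  · rw [halfEmb_one, map_pow, map_ofNat, show (2 : ZMod 2) = 0 from rfl, zero_pow k.succ_ne_zero]

lemma two_pow_succ_mul (x : ZMod (2 ^ (k + 2))) :
    2 ^ (k + 1) * x = halfEmb k (parity k x) := by
  obtain ⟨a, rfl⟩ := ZMod.intCast_surjective x
  rw [map_intCast, ← zsmul_one (R := ZMod 2) a, map_zsmul, halfEmb_one, zsmul_eq_mul, mul_comm]

lemma halfEmb_mul (y : ZMod 2) (x : ZMod (2 ^ (k + 2))) :
    halfEmb k y * x = halfEmb k (y * parity k x) := by
  obtain rfl | rfl := ZMod.eq_zero_or_eq_one y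
  · simp
  · rw [halfEmb_one, one_mul, two_pow_succ_mul]

lemma exists_halfEmb_eq_of_add_self_eq_zero {r : ZMod (2 ^ (k + 2))} (hr : r + r = 0) :
    ∃ t, halfEmb k t = r := by
  have hdvd : 2 * 2 ^ (k + 1) ∣ 2 * r.val := by
    rw [← pow_succ', ← ZMod.natCast_eq_zero_iff]
    push_cast
    rw [ZMod.natCast_zmod_val, two_mul, hr]
  obtain ⟨w, hw⟩ := Nat.dvd_of_mul_dvd_mul_left two_pos hdvd
  refine ⟨parity k w, ?_⟩
  rw [← two_pow_succ_mul, ← ZMod.natCast_zmod_val r, hw]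
  push_cast
  ring

lemma isUnit_iff_parity_eq_one (x : ZMod (2 ^ (k + 2))) : IsUnit x ↔ parity k x = 1 := by
  rw [← ZMod.natCast_zmod_val x, ZMod.isUnit_iff_coprime, Nat.coprime_pow_right_iff (by omega),
    Nat.coprime_two_right, map_natCast, ZMod.natCast_eq_one_iff_odd]

lemma parity_units (u : (ZMod (2 ^ (k + 2)))ˣ) : parity k u = 1 :=
  (isUnit_iff_parity_eq_one _).1 u.isUnit

def scaleAut (k : ℕ) :
    (ZMod (2 ^ (k + 2)))ˣ →* MulAut (Multiplicative (ZMod (2 ^ (k + 2)) × ZMod 2)) where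
  toFun u := AddEquiv.toMultiplicative
    { toFun p := (u * p.1, p.2)
      invFun p := (↑u⁻¹ * p.1, p.2)
      left_inv p := by simp
      right_inv p := by simp
      map_add' p q := by simp [mul_add] }
  map_one' := MulAut.multiplicative_prod_ext fun x y => by simp
  map_mul' u v := MulAut.multiplicative_prod_ext fun x y => by simp [mul_assoc]

lemma scaleAut_apply (u : (ZMod (2 ^ (k + 2)))ˣ) (x : ZMod (2 ^ (k + 2))) (y : ZMod 2) :
    scaleAut k u (ofAdd (x, y)) = ofAdd (u * x, y) := rfl

def shearFst (k : ℕ) : MulAut (Multiplicative (ZMod (2 ^ (k + 2)) × ZMod 2)) :=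
  AddEquiv.toMultiplicative
    { toFun p := (p.1 + halfEmb k p.2, p.2)
      invFun p := (p.1 + halfEmb k p.2, p.2)
      left_inv p := by simp [add_assoc, halfEmb_add_self]
      right_inv p := by simp [add_assoc, halfEmb_add_self]
      map_add' p q := by simp only [Prod.fst_add, Prod.snd_add, map_add, Prod.mk_add_mk]; abel_nf }

lemma shearFst_apply (x : ZMod (2 ^ (k + 2))) (y : ZMod 2) :
    shearFst k (ofAdd (x, y)) = ofAdd (x + halfEmb k y, y) := rfl

def shearSnd (k : ℕ) : MulAut (Multiplicative (ZMod (2 ^ (k + 2)) × ZMod 2)) :=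
  AddEquiv.toMultiplicative
    { toFun p := (p.1, p.2 + parity k p.1)
      invFun p := (p.1, p.2 + parity k p.1)
      left_inv p := by simp [add_assoc, CharTwo.add_self_eq_zero]
      right_inv p := by simp [add_assoc, CharTwo.add_self_eq_zero]
      map_add' p q := by simp only [Prod.fst_add, Prod.snd_add, map_add, Prod.mk_add_mk]; abel_nf }

lemma shearSnd_apply (x : ZMod (2 ^ (k + 2))) (y : ZMod 2) :
    shearSnd k (ofAdd (x, y)) = ofAdd (x, y + parity k x) := rfl

lemma shearFst_mul_self : shearFst k * shearFst k = 1 :=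
  MulAut.multiplicative_prod_ext fun x y => by simp [shearFst_apply, add_assoc, halfEmb_add_self]

lemma shearSnd_mul_self : shearSnd k * shearSnd k = 1 :=
  MulAut.multiplicative_prod_ext fun x y => by
    simp [shearSnd_apply, add_assoc, CharTwo.add_self_eq_zero]

lemma units_mul_halfEmb (u : (ZMod (2 ^ (k + 2)))ˣ) (y : ZMod 2) :
    u * halfEmb k y = halfEmb k y := by
  rw [mul_comm, halfEmb_mul, parity_units, mul_one]

lemma commute_scaleAut_shearFst (u : (ZMod (2 ^ (k + 2)))ˣ) :
    Commute (scaleAut k u) (shearFst k) :=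
  MulAut.multiplicative_prod_ext fun x y => by
    simp [scaleAut_apply, shearFst_apply, mul_add, units_mul_halfEmb]

lemma commute_scaleAut_shearSnd (u : (ZMod (2 ^ (k + 2)))ˣ) :
    Commute (scaleAut k u) (shearSnd k) :=
  MulAut.multiplicative_prod_ext fun x y => by simp [scaleAut_apply, shearSnd_apply, parity_units]

lemma sq_shearSnd_mul_shearFst {u : (ZMod (2 ^ (k + 2)))ˣ}
    (hu : (u : ZMod (2 ^ (k + 2))) = 1 + 2 ^ (k + 1)) :
    (shearSnd k * shearFst k) ^ 2 = scaleAut k u :=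
  MulAut.multiplicative_prod_ext fun x y => by
    simp only [pow_two, MulAut.mul_apply, shearFst_apply, shearSnd_apply, scaleAut_apply, hu,
      map_add, parity_halfEmb, add_zero]
    congr 1
    ext
    · linear_combination halfEmb_add_self y - two_pow_succ_mul x
    · linear_combination CharTwo.add_self_eq_zero (parity k x)

def mkAut (u : (ZMod (2 ^ (k + 2)))ˣ) (a t : ZMod 2) :
    MulAut (Multiplicative (ZMod (2 ^ (k + 2)) × ZMod 2)) :=
  shearSnd k ^ a.val * shearFst k ^ t.val * scaleAut k u

lemma mkAut_apply (u : (ZMod (2 ^ (k + 2)))ˣ) (a t : ZMod 2) (x : ZMod (2 ^ (k + 2)))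
    (y : ZMod 2) :
    mkAut u a t (ofAdd (x, y)) = ofAdd (u * x + halfEmb k (t * y), y + a * parity k x) := by
  obtain rfl | rfl := ZMod.eq_zero_or_eq_one a <;>
  obtain rfl | rfl := ZMod.eq_zero_or_eq_one t <;>
  simp [mkAut, ZMod.val_one, scaleAut_apply, shearFst_apply, shearSnd_apply, parity_units,
    parity_halfEmb]

lemma mkAut_injective :
    Function.Injective
      fun p : (ZMod (2 ^ (k + 2)))ˣ × ZMod 2 × ZMod 2 => mkAut p.1 p.2.1 p.2.2 := by
  rintro ⟨u, a, t⟩ ⟨u', a', t'⟩ h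
  have h₁ := congrArg toAdd (DFunLike.congr_fun h (ofAdd (1, 0)))
  have h₂ := congrArg toAdd (DFunLike.congr_fun h (ofAdd (0, 1)))
  simp only [mkAut_apply, toAdd_ofAdd, Prod.mk.injEq, map_one, mul_one, mul_zero, map_zero,
    add_zero, zero_add] at h₁ h₂
  rw [Units.val_inj] at h₁
  rw [h₁.1, h₁.2, halfEmb_injective h₂.1]

section Classification

variable (φ : ZMod (2 ^ (k + 2)) × ZMod 2 ≃+ ZMod (2 ^ (k + 2)) × ZMod 2)

lemma exists_halfEmb_eq_fst_apply_zero_one : ∃ t, halfEmb k t = (φ (0, 1)).1 := by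
  refine exists_halfEmb_eq_of_add_self_eq_zero ?_
  rw [← Prod.fst_add, ← map_add]
  have : ((0, 1) + (0, 1) : ZMod (2 ^ (k + 2)) × ZMod 2) = 0 := Prod.ext (add_zero 0) rfl
  rw [this, map_zero, Prod.fst_zero]

lemma parity_fst_apply_one_zero : parity k (φ (1, 0)).1 = 1 := by
  refine (ZMod.eq_zero_or_eq_one _).resolve_left fun h₀ => ?_
  obtain ⟨t, ht⟩ := exists_halfEmb_eq_fst_apply_zero_one φ
  let ψ := (parity k).toAddMonoidHom.comp ((AddMonoidHom.fst _ _).comp φ.toAddMonoidHom)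
  have hψ : ψ = 0 := ZMod.addMonoidHom_prod_ext h₀ (by simp [ψ, ← ht, parity_halfEmb])
  have := DFunLike.congr_fun hψ (φ.symm (1, 0))
  simp [ψ] at this

lemma apply_halfEmb_zero (t : ZMod 2) : φ (halfEmb k t, 0) = (halfEmb k t, 0) := by
  obtain rfl | rfl := ZMod.eq_zero_or_eq_one t
  · rw [map_zero]
    exact map_zero φ
  have h : ((2 ^ (k + 1), 0) : ZMod (2 ^ (k + 2)) × ZMod 2) = (2 ^ (k + 1) : ℕ) • (1, 0) := by
    simp
  have hsnd : ((2 ^ (k + 1) : ℕ) : ZMod 2) = 0 := by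
    rw [Nat.cast_pow, Nat.cast_ofNat, show (2 : ZMod 2) = 0 from rfl, zero_pow k.succ_ne_zero]
  rw [halfEmb_one, h, map_nsmul]
  ext
  · simp [two_pow_succ_mul, parity_fst_apply_one_zero, halfEmb_one]
  · rw [Prod.smul_snd, Prod.smul_snd, smul_zero, nsmul_eq_mul, hsnd, zero_mul]

lemma snd_apply_zero_one : (φ (0, 1)).2 = 1 := by
  refine (ZMod.eq_zero_or_eq_one _).resolve_left fun h₀ => ?_
  obtain ⟨t, ht⟩ := exists_halfEmb_eq_fst_apply_zero_one φ
  have h : φ (0, 1) = φ (halfEmb k t, 0) := by rw [apply_halfEmb_zero, ht, ← h₀]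
  exact absurd (congrArg Prod.snd (φ.injective h)) one_ne_zero

end Classification

lemma exists_mkAut_eq (g : MulAut (Multiplicative (ZMod (2 ^ (k + 2)) × ZMod 2))) :
    ∃ u a t, mkAut u a t = g := by
  set φ := AddEquiv.toMultiplicative.symm g
  have hu : IsUnit (φ (1, 0)).1 := (isUnit_iff_parity_eq_one _).2 (parity_fst_apply_one_zero φ)
  obtain ⟨t, ht⟩ := exists_halfEmb_eq_fst_apply_zero_one φ
  have hg : ∀ p, g (ofAdd p) = ofAdd (φ p) := fun _ => rfl
  refine ⟨hu.unit, (φ (1, 0)).2, t, MulAut.multiplicative_zmod_prod_ext ?_ ?_⟩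
  · rw [mkAut_apply, hg]
    exact congrArg ofAdd (Prod.ext (by simp) (by simp))
  · rw [mkAut_apply, hg]
    exact congrArg ofAdd (Prod.ext (by simp [ht]) (by simp [snd_apply_zero_one φ]))

lemma mkAut_bijective :
    Function.Bijective
      fun p : (ZMod (2 ^ (k + 2)))ˣ × ZMod 2 × ZMod 2 => mkAut p.1 p.2.1 p.2.2 :=
  ⟨mkAut_injective, fun g => let ⟨u, a, t, h⟩ := exists_mkAut_eq g; ⟨(u, a, t), h⟩⟩

lemma card_units_two_pow : Nat.card (ZMod (2 ^ (k + 2)))ˣ = 2 ^ (k + 1) := by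
  rw [Nat.card_eq_fintype_card, ZMod.card_units_eq_totient,
    Nat.totient_prime_pow_succ Nat.prime_two, Nat.add_one_sub_one, mul_one]

lemma card_mulAut :
    Nat.card (MulAut (Multiplicative (ZMod (2 ^ (k + 2)) × ZMod 2))) = 2 ^ (k + 3) := by
  rw [← Nat.card_congr (Equiv.ofBijective _ mkAut_bijective), Nat.card_prod, Nat.card_prod,
    Nat.card_zmod, card_units_two_pow]
  ring

section Units

variable (k : ℕ)

def five : (ZMod (2 ^ (k + 2)))ˣ := ZMod.unitOfCoprime 5 (Nat.Coprime.pow_right _ (by norm_num))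

lemma coe_five : (five k : ZMod (2 ^ (k + 2))) = 5 := by
  simp [five]

lemma orderOf_five : orderOf (five k) = 2 ^ k := by
  rw [← orderOf_units, coe_five]
  exact ZMod.orderOf_five k

lemma five_pow_two_pow : five k ^ 2 ^ k = 1 := by
  simpa only [orderOf_five] using pow_orderOf_eq_one (five k)

lemma coe_five_pow_two_pow :
    ((five (k + 1) ^ 2 ^ k : (ZMod (2 ^ (k + 3)))ˣ) : ZMod (2 ^ (k + 3))) = 1 + 2 ^ (k + 2) := by
  obtain ⟨y, hy⟩ := ZMod.exists_one_add_mul_pow_prime_pow_eq (R := ZMod (2 ^ (k + 3)))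
    (u := 4) (v := 2) Nat.prime_two ⟨2, by norm_num⟩ ⟨1, by norm_num⟩ 1 k
  rw [Units.val_pow_eq_pow_val, coe_five,
    show (5 : ZMod (2 ^ (k + 3))) = 1 + 4 * 1 by norm_num, hy]
  linear_combination y * two_pow_eq_zero (k := k + 1)

lemma neg_one_notMem_zpowers_five : -1 ∉ Subgroup.zpowers (five k) := by
  have h4 : 4 ∣ 2 ^ (k + 2) := pow_dvd_pow 2 (by omega : 2 ≤ k + 2)
  have h5 : ZMod.unitsMap h4 (five k) = 1 := Units.ext <| by
    change ZMod.castHom h4 (ZMod 4) (five k : ZMod (2 ^ (k + 2))) = 1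
    rw [coe_five, map_ofNat]
    rfl
  rintro ⟨z, hz⟩
  have h := congrArg (fun u => (ZMod.unitsMap h4 u : ZMod 4)) hz
  change ((ZMod.unitsMap h4 (five k ^ z) : (ZMod 4)ˣ) : ZMod 4) =
    ZMod.castHom h4 (ZMod 4) ((-1 : (ZMod (2 ^ (k + 2)))ˣ) : ZMod (2 ^ (k + 2))) at h
  rw [map_zpow, h5, one_zpow] at h
  simp only [Units.val_neg, Units.val_one, map_neg, map_one] at h
  exact absurd h (by decide)

lemma closure_five_neg_one : Subgroup.closure {five k, -1} = ⊤ := by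
  set H := Subgroup.zpowers (five k)
  have hindex : H.index = 2 := by
    have := H.index_mul_card
    rw [Nat.card_zpowers, orderOf_five, card_units_two_pow] at this
    exact Nat.eq_of_mul_eq_mul_right (by positivity) (this.trans (pow_succ' 2 k))
  have hH : H ≤ Subgroup.closure {five k, -1} :=
    Subgroup.zpowers_le.2 (Subgroup.subset_closure (Set.mem_insert _ _))
  have hneg : (-1 : (ZMod (2 ^ (k + 2)))ˣ) ∈ Subgroup.closure {five k, -1} :=
    Subgroup.subset_closure (Set.mem_insert_of_mem _ rfl)
  refine eq_top_iff.2 fun u _ => ?_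
  by_cases hu : u ∈ H
  · exact hH hu
  · have : u * -1 ∈ H := by
      rw [Subgroup.mul_mem_iff_of_index_two hindex]
      exact iff_of_false hu (neg_one_notMem_zpowers_five k)
    simpa using mul_mem (hH this) hneg

end Units

section Presentation

variable (m : ℕ)

def c : PresentedGroup (autRels (m + 3)) := .of 0
def d : PresentedGroup (autRels (m + 3)) := .of 1
def e : PresentedGroup (autRels (m + 3)) := .of 2
def f : PresentedGroup (autRels (m + 3)) := .of 3

lemma c_pow_four : c m ^ 4 = 1 := by
  have := PresentedGroup.one_of_mem (rels := autRels (m + 3)) (x := FreeGroup.of 0 ^ 4)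
    (by simp [autRels])
  rwa [map_pow] at this

lemma d_sq : d m ^ 2 = 1 := by
  have := PresentedGroup.one_of_mem (rels := autRels (m + 3)) (x := FreeGroup.of 1 ^ 2)
    (by simp [autRels])
  rwa [map_pow] at this

lemma f_sq : f m ^ 2 = 1 := by
  have := PresentedGroup.one_of_mem (rels := autRels (m + 3)) (x := FreeGroup.of 3 ^ 2)
    (by simp [autRels])
  rwa [map_pow] at this

lemma e_pow_two_pow_succ : e m ^ 2 ^ (m + 1) = 1 := by
  have := PresentedGroup.one_of_mem (rels := autRels (m + 3))
    (x := FreeGroup.of 2 ^ 2 ^ (m + 1)) (by simp [autRels])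
  rwa [map_pow] at this

lemma c_sq_mul_e_pow : c m ^ 2 * e m ^ 2 ^ m = 1 := by
  have := PresentedGroup.one_of_mem (rels := autRels (m + 3))
    (x := FreeGroup.of 0 ^ 2 * FreeGroup.of 2 ^ 2 ^ m) (by simp [autRels])
  rwa [map_mul, map_pow, map_pow] at this

lemma d_inv_mul_c_mul_d_mul_c : (d m)⁻¹ * c m * d m * c m = 1 := by
  have := PresentedGroup.one_of_mem (rels := autRels (m + 3))
    (x := (FreeGroup.of 1)⁻¹ * FreeGroup.of 0 * FreeGroup.of 1 * FreeGroup.of 0)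
    (by simp [autRels])
  rwa [map_mul, map_mul, map_mul, map_inv] at this

lemma commute_of_mem {a b : Fin 4}
    (h : (⁅FreeGroup.of a, FreeGroup.of b⁆ : FreeGroup (Fin 4)) ∈ autRels (m + 3)) :
    Commute (PresentedGroup.of a : PresentedGroup (autRels (m + 3))) (.of b) := by
  have := PresentedGroup.one_of_mem h
  rwa [map_commutatorElement, commutatorElement_eq_one_iff_commute] at this

lemma commute_c_e : Commute (c m) (e m) := commute_of_mem m (by simp [autRels])
lemma commute_d_e : Commute (d m) (e m) := commute_of_mem m (by simp [autRels])
lemma commute_c_f : Commute (c m) (f m) := commute_of_mem m (by simp [autRels])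
lemma commute_d_f : Commute (d m) (f m) := commute_of_mem m (by simp [autRels])
lemma commute_e_f : Commute (e m) (f m) := commute_of_mem m (by simp [autRels])

lemma c_sq : c m ^ 2 = e m ^ 2 ^ m := by
  rw [eq_inv_of_mul_eq_one_left (c_sq_mul_e_pow m)]
  refine inv_eq_of_mul_eq_one_right ?_
  rw [← pow_add, ← two_mul, ← pow_succ', e_pow_two_pow_succ]

lemma d_mul_c : d m * c m = c m ^ 3 * d m := by
  have hd : (d m)⁻¹ = d m := inv_eq_of_mul_eq_one_right (by rw [← sq, d_sq])
  have hc : (c m)⁻¹ = c m ^ 3 := inv_eq_of_mul_eq_one_right (by rw [← pow_succ', c_pow_four])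
  have h : (d m)⁻¹ * c m * d m = (c m)⁻¹ := eq_inv_of_mul_eq_one_left (d_inv_mul_c_mul_d_mul_c m)
  calc d m * c m = (d m)⁻¹ * c m * d m * (d m)⁻¹ := by rw [mul_inv_cancel_right, hd]
    _ = c m ^ 3 * d m := by rw [h, hc, hd]

lemma isOfFinOrder_of (i : Fin 4) :
    IsOfFinOrder (PresentedGroup.of i : PresentedGroup (autRels (m + 3))) := by
  rw [isOfFinOrder_iff_pow_eq_one]
  fin_cases i
  exacts [⟨4, by norm_num, c_pow_four m⟩, ⟨2, two_pos, d_sq m⟩,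
    ⟨2 ^ (m + 1), by positivity, e_pow_two_pow_succ m⟩, ⟨2, two_pos, f_sq m⟩]

def word (a b i j : ℕ) : PresentedGroup (autRels (m + 3)) :=
  e m ^ a * (f m ^ b * (c m ^ i * d m ^ j))

variable {m} (a b i j : ℕ)

lemma c_mul_word : c m * word m a b i j = word m a b (i + 1) j := by
  rw [word, word, ((commute_c_e m).pow_right a).left_comm,
    ((commute_c_f m).pow_right b).left_comm, ← mul_assoc (c m), ← pow_succ']

lemma d_mul_word : d m * word m a b i j = word m a b (3 * i) (j + 1) := by
  have hdc : SemiconjBy (d m) (c m) (c m ^ 3) := d_mul_c m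
  rw [word, word, ((commute_d_e m).pow_right a).left_comm,
    ((commute_d_f m).pow_right b).left_comm, ← mul_assoc (d m), (hdc.pow_right i).eq, mul_assoc,
    ← pow_succ', pow_mul]

lemma e_mul_word : e m * word m a b i j = word m (a + 1) b i j := by
  rw [word, word, ← mul_assoc, ← pow_succ']

lemma f_mul_word : f m * word m a b i j = word m a (b + 1) i j := by
  rw [word, word, ((commute_e_f m).pow_left a).symm.left_comm, ← mul_assoc (f m), ← pow_succ']

variable (m)

lemma exists_word_eq (g : PresentedGroup (autRels (m + 3))) : ∃ a b i j, word m a b i j = g := by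
  have hg : g ∈ Subgroup.closure (Set.range PresentedGroup.of) := by
    rw [PresentedGroup.closure_range_of]; trivial
  refine Subgroup.closure_induction_left_of_isOfFinOrder
    (p := fun g => ∃ a b i j, word m a b i j = g) ?_ ⟨0, 0, 0, 0, by simp [word]⟩ ?_ hg
  · rintro _ ⟨i, rfl⟩
    exact isOfFinOrder_of m i
  · rintro _ ⟨x, rfl⟩ _ ⟨a, b, i, j, rfl⟩
    fin_cases x
    exacts [⟨_, _, _, _, (c_mul_word a b i j).symm⟩, ⟨_, _, _, _, (d_mul_word a b i j).symm⟩,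
      ⟨_, _, _, _, (e_mul_word a b i j).symm⟩, ⟨_, _, _, _, (f_mul_word a b i j).symm⟩]

lemma word_eq_word_mod :
    word m a b i j = word m ((a + 2 ^ m * (i / 2)) % 2 ^ (m + 1)) (b % 2) (i % 2) (j % 2) := by
  have hc : c m ^ i = e m ^ (2 ^ m * (i / 2)) * c m ^ (i % 2) := by
    conv_lhs => rw [← Nat.div_add_mod i 2, pow_add, pow_mul, c_sq, ← pow_mul]
  rw [word, word, hc, ← pow_eq_pow_mod _ (e_pow_two_pow_succ m), ← pow_eq_pow_mod _ (f_sq m),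
    ← pow_eq_pow_mod _ (d_sq m), pow_add, mul_assoc (e m ^ a),
    mul_assoc (e m ^ (2 ^ m * (i / 2))), ((commute_e_f m).pow_pow (2 ^ m * (i / 2)) b).left_comm]

lemma word_surjective : Function.Surjective
    fun p : Fin (2 ^ (m + 1)) × Fin 2 × Fin 2 × Fin 2 => word m p.1 p.2.1 p.2.2.1 p.2.2.2 := by
  intro g
  obtain ⟨a, b, i, j, rfl⟩ := exists_word_eq m g
  exact ⟨(⟨_, Nat.mod_lt _ (by positivity)⟩, ⟨_, Nat.mod_lt b two_pos⟩,
    ⟨_, Nat.mod_lt i two_pos⟩, ⟨_, Nat.mod_lt j two_pos⟩), (word_eq_word_mod m a b i j).symm⟩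

instance : Finite (PresentedGroup (autRels (m + 3))) := Finite.of_surjective _ (word_surjective m)

lemma card_presentedGroup_le : Nat.card (PresentedGroup (autRels (m + 3))) ≤ 2 ^ (m + 4) :=
  (Nat.card_le_card_of_surjective _ (word_surjective m)).trans_eq <| by
    simp only [Nat.card_prod, Nat.card_fin]
    ring

end Presentation

section Isomorphism

variable (m : ℕ)

def autGens : Fin 4 → MulAut (Multiplicative (ZMod (2 ^ (m + 3)) × ZMod 2)) :=
  ![shearSnd (m + 1) * shearFst (m + 1), shearFst (m + 1), scaleAut (m + 1) (five (m + 1)),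
    scaleAut (m + 1) (-1)]

lemma sq_autGens_zero : autGens m 0 ^ 2 = scaleAut (m + 1) (five (m + 1) ^ 2 ^ m) :=
  sq_shearSnd_mul_shearFst (coe_five_pow_two_pow m)

lemma five_pow_two_pow_sq : (five (m + 1) ^ 2 ^ m) ^ 2 = 1 := by
  rw [← pow_mul, ← pow_succ, five_pow_two_pow]

lemma autGens_rels : ∀ r ∈ autRels (m + 3), FreeGroup.lift (autGens m) r = 1 := by
  have hC : autGens m 0 = shearSnd (m + 1) * shearFst (m + 1) := rfl
  have hD : autGens m 1 = shearFst (m + 1) := rfl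
  have hE : autGens m 2 = scaleAut (m + 1) (five (m + 1)) := rfl
  have hF : autGens m 3 = scaleAut (m + 1) (-1) := rfl
  intro r hr
  simp only [autRels, Set.mem_insert_iff, Set.mem_singleton_iff] at hr
  rcases hr with rfl | rfl | rfl | rfl | rfl | rfl | rfl | rfl | rfl | rfl | rfl <;>
    simp only [map_pow, map_mul, map_inv, map_commutatorElement, FreeGroup.lift_apply_of,
      commutatorElement_eq_one_iff_commute]
  · rw [← pow_mul_pow_sub _ (by norm_num : 2 ≤ 4), sq_autGens_zero, ← map_mul, ← sq,
      five_pow_two_pow_sq, map_one]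
  · rw [hD, sq, shearFst_mul_self]
  · rw [hC, hD, inv_eq_of_mul_eq_one_right shearFst_mul_self]
    calc shearFst (m + 1) * (shearSnd (m + 1) * shearFst (m + 1)) * shearFst (m + 1) *
          (shearSnd (m + 1) * shearFst (m + 1))
        = shearFst (m + 1) * (shearSnd (m + 1) * (shearFst (m + 1) * shearFst (m + 1)) *
          shearSnd (m + 1)) * shearFst (m + 1) := by group
      _ = 1 := by rw [shearFst_mul_self, mul_one, shearSnd_mul_self, mul_one, shearFst_mul_self]
  · rw [hE, ← map_pow, show m + 3 - 2 = m + 1 by omega, five_pow_two_pow, map_one]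
  · rw [show m + 3 - 3 = m by omega, sq_autGens_zero, hE, ← map_pow, ← map_mul, ← sq,
      five_pow_two_pow_sq, map_one]
  · rw [hC, hE]
    exact ((commute_scaleAut_shearSnd _).mul_right (commute_scaleAut_shearFst _)).symm
  · rw [hD, hE]
    exact (commute_scaleAut_shearFst _).symm
  · rw [hF, ← map_pow, neg_one_sq, map_one]
  · rw [hC, hF]
    exact ((commute_scaleAut_shearSnd _).mul_right (commute_scaleAut_shearFst _)).symm
  · rw [hD, hF]
    exact (commute_scaleAut_shearFst _).symm
  · rw [hE, hF]
    exact (Commute.all _ _).map _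

def toAut :
    PresentedGroup (autRels (m + 3)) →* MulAut (Multiplicative (ZMod (2 ^ (m + 3)) × ZMod 2)) :=
  PresentedGroup.toGroup (autGens_rels m)

lemma toAut_surjective : Function.Surjective (toAut m) := by
  have hgen (i : Fin 4) : autGens m i ∈ (toAut m).range := ⟨.of i, PresentedGroup.toGroup.of _⟩
  have hshearFst : shearFst (m + 1) ∈ (toAut m).range := hgen 1
  have hshearSnd : shearSnd (m + 1) ∈ (toAut m).range := by
    have := mul_mem (hgen 0) hshearFst
    rwa [show autGens m 0 = shearSnd (m + 1) * shearFst (m + 1) from rfl, mul_assoc,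
      shearFst_mul_self, mul_one] at this
  have hscale : (toAut m).range.comap (scaleAut (m + 1)) = ⊤ := by
    rw [eq_top_iff, ← closure_five_neg_one, Subgroup.closure_le]
    rintro _ (rfl | rfl)
    exacts [hgen 2, hgen 3]
  intro g
  obtain ⟨u, a, t, rfl⟩ := exists_mkAut_eq g
  exact mul_mem (mul_mem (pow_mem hshearSnd _) (pow_mem hshearFst _))
    (hscale ▸ Subgroup.mem_top u : u ∈ (toAut m).range.comap (scaleAut (m + 1)))

lemma toAut_bijective : Function.Bijective (toAut m) :=
  (toAut_surjective m).bijective_of_nat_card_le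
    ((card_presentedGroup_le m).trans_eq card_mulAut.symm)

end Isomorphism

end AutZModTwoPowProd

/-- For `n ≥ 3`, the automorphism group of the abelian group `C_{2^n} × C_2` is isomorphic
to the presented group `⟨c,d,e,f ∣ c⁴, d², d⁻¹cdc, e^(2^(n-2)), c²e^(2^(n-3)),
⁅c,e⁆, ⁅d,e⁆, f², ⁅c,f⁆, ⁅d,f⁆, ⁅e,f⁆⟩`. -/
theorem mulAut_zmod_two_pow_presentation (n : ℕ) (hn : 3 ≤ n) :
    Nonempty (MulAut (Multiplicative (ZMod (2 ^ n) × ZMod 2)) ≃* PresentedGroup (autRels n)) := by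
  obtain ⟨m, rfl⟩ := Nat.exists_eq_add_of_le' hn
  exact ⟨(MulEquiv.ofBijective _ (AutZModTwoPowProd.toAut_bijective m)).symm⟩
end

section
/- Let p be an odd prime, m ≥ 2 and n ≥ 1. The holomorph Hol(C_{p^m} × (C_p)^n) has a normal subgroup N isomorphic to the elementary abelian group (C_p)^{2(n+1)} such that the quotient Hol(C_{p^m} × (C_p)^n)/N is isomorphic to Hol((C_p)^n) × Hol(C_{p^{m-1}}). -/
namespace HolStruct
set_option linter.unusedSectionVars false

variable {p m : ℕ} [hp : Fact p.Prime]

instance : NeZero (p ^ m) := ⟨pow_ne_zero m hp.out.ne_zero⟩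

lemma hdvd (m : ℕ) : p ^ (m - 1) ∣ p ^ m := pow_dvd_pow p (Nat.sub_le m 1)

lemma hdvd_p (hm : 2 ≤ m) : p ∣ p ^ (m - 1) := dvd_pow_self p (by omega)

lemma hdvd_pm (hm : 2 ≤ m) : p ∣ p ^ m := dvd_pow_self p (by omega)

lemma hsplit (hm : 2 ≤ m) : p ^ m = p ^ (m - 1) * p := by
  conv_lhs => rw [show m = (m - 1) + 1 by omega]
  rw [pow_succ]

lemma qq_zero (hm : 2 ≤ m) :
    ((p ^ (m - 1) : ℕ) : ZMod (p ^ m)) * ((p ^ (m - 1) : ℕ) : ZMod (p ^ m)) = 0 := by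
  rw [← Nat.cast_mul, ZMod.natCast_eq_zero_iff, ← pow_add]
  exact pow_dvd_pow p (by omega)

/-- `x` is `p`-torsion. -/
def TorE (m : ℕ) (x : ZMod (p ^ m)) : Prop := ∃ k : ℕ, x = ((p ^ (m - 1) * k : ℕ) : ZMod (p ^ m))

lemma psmul_eq (x : ZMod (p ^ m)) : p • x = (p : ZMod (p ^ m)) * x := by
  rw [nsmul_eq_mul]

lemma torE_of_psmul (hm : 2 ≤ m) {x : ZMod (p ^ m)} (hx : p • x = 0) : TorE m x := by
  have hx' : ((p * x.val : ℕ) : ZMod (p ^ m)) = 0 := by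
    push_cast
    rw [ZMod.natCast_val, ZMod.cast_id, ← psmul_eq, hx]
  rw [ZMod.natCast_eq_zero_iff] at hx'
  have h2 : p ^ (m - 1) ∣ x.val := by
    rcases hx' with ⟨t, ht⟩
    have hp0 : 0 < p := hp.out.pos
    refine ⟨t, ?_⟩
    have h3 : p * x.val = p * (p ^ (m - 1) * t) := by
      rw [ht, hsplit hm]; ring
    exact Nat.eq_of_mul_eq_mul_left hp0 h3
  rcases h2 with ⟨k, hk⟩
  exact ⟨k, by rw [← hk, ZMod.natCast_val, ZMod.cast_id]⟩

lemma psmul_of_torE (hm : 2 ≤ m) {x : ZMod (p ^ m)} (hx : TorE m x) : p • x = 0 := by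
  rcases hx with ⟨k, rfl⟩
  rw [psmul_eq, ← Nat.cast_mul, show p * (p ^ (m-1) * k) = p ^ m * k by rw [hsplit hm]; ring,
    Nat.cast_mul, ZMod.natCast_self, zero_mul]

/-- division by `p^(m-1)` into `ZMod p`. -/
def qu (m : ℕ) (x : ZMod (p ^ m)) : ZMod p := ((x.val / p ^ (m - 1) : ℕ) : ZMod p)

lemma qu_cast_mul (hm : 2 ≤ m) (k : ℕ) :
    qu m ((p ^ (m - 1) * k : ℕ) : ZMod (p ^ m)) = (k : ZMod p) := by
  unfold qu
  rw [ZMod.val_natCast]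
  have hq0 : 0 < p ^ (m - 1) := Nat.pow_pos hp.out.pos
  conv_lhs => rw [hsplit hm, Nat.mul_mod_mul_left, Nat.mul_div_cancel_left _ hq0]
  exact ZMod.natCast_mod k p ▸ rfl
/-- lift `ZMod p` into `ZMod (p^m)`. -/
def upc (m : ℕ) (t : ZMod p) : ZMod (p ^ m) := (t.val : ZMod (p ^ m))

lemma q_cast_mod (hm : 2 ≤ m) (k : ℕ) :
    ((p ^ (m - 1) : ℕ) : ZMod (p ^ m)) * ((k % p : ℕ) : ZMod (p ^ m))
      = ((p ^ (m - 1) : ℕ) : ZMod (p ^ m)) * (k : ℕ) := by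
  conv_rhs => rw [show k = p * (k / p) + k % p from (Nat.div_add_mod k p).symm ▸ rfl]
  push_cast
  rw [mul_add, ← mul_assoc]
  rw [show ((p:ZMod (p^m)) ^ (m-1)) * p = 0 by
    rw [← Nat.cast_pow, ← Nat.cast_mul, ← hsplit hm, ZMod.natCast_self]]
  rw [zero_mul, zero_add]

lemma tor_decomp (hm : 2 ≤ m) {x : ZMod (p ^ m)} (hx : TorE m x) :
    x = ((p ^ (m - 1) : ℕ) : ZMod (p ^ m)) * upc m (qu m x) := by
  rcases hx with ⟨k, rfl⟩
  rw [qu_cast_mul hm, upc, ZMod.val_natCast, q_cast_mod hm, Nat.cast_mul]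

lemma qu_q_upc (hm : 2 ≤ m) (t : ZMod p) :
    qu m (((p ^ (m - 1) : ℕ) : ZMod (p ^ m)) * upc m t) = t := by
  rw [upc, ← Nat.cast_mul, qu_cast_mul hm, ZMod.natCast_val, ZMod.cast_id]

lemma qu_zero : qu m (0 : ZMod (p ^ m)) = 0 := by
  unfold qu
  rw [ZMod.val_zero, Nat.zero_div, Nat.cast_zero]

lemma torE_zero : TorE m (0 : ZMod (p ^ m)) := ⟨0, by rw [Nat.mul_zero, Nat.cast_zero]⟩

lemma torE_add (hm : 2 ≤ m) {x y : ZMod (p ^ m)} (hx : TorE m x) (hy : TorE m y) :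
    TorE m (x + y) := by
  rcases hx with ⟨k, rfl⟩; rcases hy with ⟨l, rfl⟩
  exact ⟨k + l, by push_cast; ring⟩

lemma qu_add (hm : 2 ≤ m) {x y : ZMod (p ^ m)} (hx : TorE m x) (hy : TorE m y) :
    qu m (x + y) = qu m x + qu m y := by
  rcases hx with ⟨k, rfl⟩; rcases hy with ⟨l, rfl⟩
  rw [← Nat.cast_add, ← Nat.mul_add, qu_cast_mul hm, qu_cast_mul hm, qu_cast_mul hm, Nat.cast_add]

lemma torE_mul (hm : 2 ≤ m) (a : ZMod (p ^ m)) {x : ZMod (p ^ m)} (hx : TorE m x) :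
    TorE m (a * x) := by
  rcases hx with ⟨k, rfl⟩
  refine ⟨a.val * k, ?_⟩
  push_cast
  rw [ZMod.natCast_val, ZMod.cast_id]
  ring

lemma qu_mul (hm : 2 ≤ m) (a : ZMod (p ^ m)) {x : ZMod (p ^ m)} (hx : TorE m x) :
    qu m (a * x) = ((a.val : ZMod p)) * qu m x := by
  rcases hx with ⟨k, rfl⟩
  have h1 : a * ((p ^ (m - 1) * k : ℕ) : ZMod (p ^ m)) = ((p ^ (m - 1) * (a.val * k) : ℕ) : ZMod (p ^ m)) := by
    push_cast
    rw [ZMod.natCast_val, ZMod.cast_id]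
    ring
  rw [h1, qu_cast_mul hm, qu_cast_mul hm, Nat.cast_mul]

lemma torE_nsmul (hm : 2 ≤ m) (k : ℕ) {x : ZMod (p ^ m)} (hx : TorE m x) :
    TorE m (k • x) := by
  rw [nsmul_eq_mul]; exact torE_mul hm _ hx

lemma qu_eq_zero (hm : 2 ≤ m) {x : ZMod (p ^ m)} (hx : TorE m x) (h : qu m x = 0) : x = 0 := by
  rw [tor_decomp hm hx, h, upc, ZMod.val_zero, Nat.cast_zero, mul_zero]

/-- reduction mod `p^(m-1)`. -/
def castq (m : ℕ) : ZMod (p ^ m) →+* ZMod (p ^ (m - 1)) := ZMod.castHom (hdvd m) _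

/-- reduction mod `p`. -/
def castp (hm : 2 ≤ m) : ZMod (p ^ m) →+* ZMod p := ZMod.castHom (hdvd_pm hm) _

lemma castq_torE (hm : 2 ≤ m) {x : ZMod (p ^ m)} (hx : TorE m x) : castq m x = 0 := by
  rcases hx with ⟨k, rfl⟩
  rw [castq, map_natCast, ZMod.natCast_eq_zero_iff]
  exact Dvd.dvd.mul_right dvd_rfl k

lemma castp_torE (hm : 2 ≤ m) {x : ZMod (p ^ m)} (hx : TorE m x) : castp hm x = 0 := by
  rcases hx with ⟨k, rfl⟩
  rw [castp, map_natCast, ZMod.natCast_eq_zero_iff]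
  exact Dvd.dvd.mul_right (hdvd_p hm) k

lemma torE_of_castq (hm : 2 ≤ m) {x : ZMod (p ^ m)} (h : castq m x = 0) : TorE m x := by
  rw [castq, ZMod.castHom_apply] at h
  have h1 : ((x.val : ℕ) : ZMod (p ^ (m - 1))) = 0 := by
    rw [ZMod.natCast_val]; exact h
  rw [ZMod.natCast_eq_zero_iff] at h1
  rcases h1 with ⟨k, hk⟩
  exact ⟨k, by rw [← hk, ZMod.natCast_val, ZMod.cast_id]⟩

lemma castq_natCast_q (hm : 2 ≤ m) :
    castq m ((p ^ (m - 1) : ℕ) : ZMod (p ^ m)) = 0 := by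
  rw [castq, map_natCast, ZMod.natCast_eq_zero_iff]

lemma castp_natCast_q (hm : 2 ≤ m) :
    castp hm ((p ^ (m - 1) : ℕ) : ZMod (p ^ m)) = 0 := by
  rw [castp, map_natCast, ZMod.natCast_eq_zero_iff]
  exact hdvd_p hm

lemma castp_of_castq (hm : 2 ≤ m) {x : ZMod (p ^ m)} (h : castq m x = 0) : castp hm x = 0 :=
  castp_torE hm (torE_of_castq hm h)

lemma upc_zero : upc m (0 : ZMod p) = 0 := by
  rw [upc, ZMod.val_zero, Nat.cast_zero]
variable {n : ℕ}

/-- standard basis vector -/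
def eV (p n : ℕ) (i : Fin n) : Fin n → ZMod p := Pi.single i 1

lemma psmul_V (y : Fin n → ZMod p) : p • y = 0 := by
  funext i
  rw [Pi.smul_apply, nsmul_eq_mul, ZMod.natCast_self, zero_mul]
  rfl

lemma single_eq_smul (i : Fin n) (t : ZMod p) :
    Pi.single i t = t.val • eV p n i := by
  funext j
  rw [Pi.smul_apply, eV, Pi.single_apply, Pi.single_apply]
  by_cases hij : j = i
  · simp [hij, nsmul_eq_mul, ZMod.natCast_val, ZMod.cast_id]
  · simp [hij]

lemma map_expand {Z : Type*} [AddCommGroup Z] (f : (Fin n → ZMod p) → Z)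
    (hf : ∀ a b, f (a + b) = f a + f b) (y : Fin n → ZMod p) :
    f y = ∑ i, (y i).val • f (eV p n i) := by
  let F : (Fin n → ZMod p) →+ Z := AddMonoidHom.mk' f hf
  show F y = _
  conv_lhs => rw [← Finset.univ_sum_single y, map_sum]
  refine Finset.sum_congr rfl fun i _ => ?_
  rw [single_eq_smul, map_nsmul]
  rfl

lemma sum_single_mul (y : Fin n → ZMod p) (i : Fin n) :
    ∑ j, y j * eV p n i j = y i := by
  rw [Finset.sum_eq_single i]
  · rw [eV, Pi.single_eq_same, mul_one]
  · intro j _ hj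
    rw [eV, Pi.single_eq_of_ne hj, mul_zero]
  · intro h; exact absurd (Finset.mem_univ i) h

lemma vec_expand (y : Fin n → ZMod p) : ∑ i, (y i).val • eV p n i = y := by
  conv_rhs => rw [← Finset.univ_sum_single y]
  exact Finset.sum_congr rfl fun i _ => (single_eq_smul i (y i)).symm

abbrev GAt (p m n : ℕ) : Type := ZMod (p ^ m) × (Fin n → ZMod p)
abbrev GGt (p m n : ℕ) : Type := Multiplicative (GAt p m n)

/-- apply an automorphism of the multiplicative group additively -/
def apA (φ : MulAut (GGt p m n)) (g : GAt p m n) : GAt p m n :=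
  (φ (Multiplicative.ofAdd g)).toAdd

lemma apA_add (φ : MulAut (GGt p m n)) (g g' : GAt p m n) :
    apA φ (g + g') = apA φ g + apA φ g' := by
  unfold apA
  rw [← toAdd_mul, ← map_mul]
  rfl

/-- bundled version -/
def apAH (φ : MulAut (GGt p m n)) : GAt p m n →+ GAt p m n :=
  AddMonoidHom.mk' (apA φ) (apA_add φ)

lemma apA_zero (φ : MulAut (GGt p m n)) : apA φ 0 = 0 := (apAH φ).map_zero

lemma apA_nsmul (φ : MulAut (GGt p m n)) (k : ℕ) (g : GAt p m n) :
    apA φ (k • g) = k • apA φ g := (apAH φ).map_nsmul k g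

lemma apA_mul (φ ψ : MulAut (GGt p m n)) (g : GAt p m n) :
    apA (φ * ψ) g = apA φ (apA ψ g) := rfl

lemma apA_one (g : GAt p m n) : apA (1 : MulAut (GGt p m n)) g = g := rfl

lemma apA_inv_apply (φ : MulAut (GGt p m n)) (g : GAt p m n) :
    apA φ⁻¹ (apA φ g) = g := by
  rw [← apA_mul, inv_mul_cancel, apA_one]

lemma apA_apply_inv (φ : MulAut (GGt p m n)) (g : GAt p m n) :
    apA φ (apA φ⁻¹ g) = g := by
  rw [← apA_mul, mul_inv_cancel, apA_one]

/-- the `a`-block -/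
def aB (φ : MulAut (GGt p m n)) : ZMod (p ^ m) := (apA φ (1, 0)).1
/-- the `c`-block -/
def cB (φ : MulAut (GGt p m n)) : Fin n → ZMod p := (apA φ (1, 0)).2
/-- the `b`-block -/
def bB (φ : MulAut (GGt p m n)) (y : Fin n → ZMod p) : ZMod (p ^ m) := (apA φ (0, y)).1
/-- the `d`-block -/
def dB (φ : MulAut (GGt p m n)) (y : Fin n → ZMod p) : Fin n → ZMod p := (apA φ (0, y)).2

lemma apA_decomp (φ : MulAut (GGt p m n)) (x : ZMod (p ^ m)) (y : Fin n → ZMod p) :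
    apA φ (x, y) = x.val • apA φ (1, 0) + apA φ (0, y) := by
  rw [← apA_nsmul, ← apA_add]
  congr 1
  have h1 : ((x.val • (1, (0 : Fin n → ZMod p)) + ((0 : ZMod (p ^ m)), y)) : GAt p m n)
      = (x.val • 1 + 0, x.val • (0 : Fin n → ZMod p) + y) := rfl
  rw [h1]
  refine Prod.ext ?_ ?_
  · show x = x.val • (1 : ZMod (p ^ m)) + 0
    rw [add_zero, nsmul_eq_mul, mul_one, ZMod.natCast_val, ZMod.cast_id]
  · show y = x.val • (0 : Fin n → ZMod p) + y
    rw [smul_zero, zero_add]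
lemma psmul_apA_V (φ : MulAut (GGt p m n)) (y : Fin n → ZMod p) :
    p • (apA φ (0, y)) = 0 := by
  have h0 : (p • ((0 : ZMod (p ^ m)), y) : GAt p m n) = (0, 0) := by
    refine Prod.ext ?_ ?_
    · show p • (0 : ZMod (p ^ m)) = 0
      rw [smul_zero]
    · show p • y = 0
      exact psmul_V y
  rw [← apA_nsmul, h0]
  exact apA_zero φ

lemma torE_bB (hm : 2 ≤ m) (φ : MulAut (GGt p m n)) (y : Fin n → ZMod p) :
    TorE m (bB φ y) := by
  refine torE_of_psmul hm ?_
  have := congrArg Prod.fst (psmul_apA_V φ y)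
  exact this

lemma val_smul_V (hm : 2 ≤ m) {x : ZMod (p ^ m)} (hx : TorE m x) (v : Fin n → ZMod p) :
    x.val • v = 0 := by
  rcases hx with ⟨k, rfl⟩
  have hval : ((p ^ (m - 1) * k : ℕ) : ZMod (p ^ m)).val = p ^ (m - 1) * (k % p) := by
    rw [ZMod.val_natCast]
    conv_lhs => rw [hsplit hm, Nat.mul_mod_mul_left]
  have hpdvd : p ∣ ((p ^ (m - 1) * k : ℕ) : ZMod (p ^ m)).val := by
    rw [hval]
    exact Dvd.dvd.mul_right (hdvd_p hm) _
  rcases hpdvd with ⟨t, ht⟩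
  rw [ht, mul_smul]
  exact psmul_V _

lemma bB_add (φ : MulAut (GGt p m n)) (y y' : Fin n → ZMod p) :
    bB φ (y + y') = bB φ y + bB φ y' := by
  unfold bB
  have h : ((0 : ZMod (p ^ m)), y + y') = ((0 : ZMod (p ^ m)), y) + (0, y') := by
    refine Prod.ext ?_ ?_ <;> simp
  rw [h, apA_add]
  rfl

lemma dB_add (φ : MulAut (GGt p m n)) (y y' : Fin n → ZMod p) :
    dB φ (y + y') = dB φ y + dB φ y' := by
  unfold dB
  have h : ((0 : ZMod (p ^ m)), y + y') = ((0 : ZMod (p ^ m)), y) + (0, y') := by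
    refine Prod.ext ?_ ?_ <;> simp
  rw [h, apA_add]
  rfl

lemma apA_V_eq (φ : MulAut (GGt p m n)) (y : Fin n → ZMod p) :
    apA φ (0, y) = (bB φ y, dB φ y) := rfl

lemma dB_mul (hm : 2 ≤ m) (φ ψ : MulAut (GGt p m n)) (y : Fin n → ZMod p) :
    dB (φ * ψ) y = dB φ (dB ψ y) := by
  show (apA (φ * ψ) (0, y)).2 = _
  rw [apA_mul, apA_V_eq ψ, apA_decomp]
  have h2 : ((bB ψ y).val • apA φ (1, 0) + apA φ (0, dB ψ y)).2
      = (bB ψ y).val • cB φ + dB φ (dB ψ y) := rfl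
  rw [h2, val_smul_V hm (torE_bB hm ψ y), zero_add]

lemma dB_one (y : Fin n → ZMod p) : dB (1 : MulAut (GGt p m n)) y = y := rfl

lemma dB_inv_left (hm : 2 ≤ m) (φ : MulAut (GGt p m n)) (y : Fin n → ZMod p) :
    dB φ⁻¹ (dB φ y) = y := by
  rw [← dB_mul hm, inv_mul_cancel, dB_one]

lemma dB_inv_right (hm : 2 ≤ m) (φ : MulAut (GGt p m n)) (y : Fin n → ZMod p) :
    dB φ (dB φ⁻¹ y) = y := by
  rw [← dB_mul hm, mul_inv_cancel, dB_one]

lemma apA_A_eq (φ : MulAut (GGt p m n)) :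
    apA φ (1, 0) = (aB φ, cB φ) := rfl

lemma aB_mul_decomp (φ ψ : MulAut (GGt p m n)) :
    aB (φ * ψ) = (aB ψ).val • aB φ + bB φ (cB ψ) := by
  show (apA (φ * ψ) (1, 0)).1 = _
  rw [apA_mul, apA_A_eq ψ, apA_decomp]
  rfl

lemma aB_one : aB (1 : MulAut (GGt p m n)) = 1 := rfl

lemma castq_aB_mul (hm : 2 ≤ m) (φ ψ : MulAut (GGt p m n)) :
    castq m (aB (φ * ψ)) = castq m (aB φ) * castq m (aB ψ) := by
  rw [aB_mul_decomp, map_add, castq_torE hm (torE_bB hm φ (cB ψ)), add_zero,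
    nsmul_eq_mul, map_mul, map_natCast, ZMod.natCast_val]
  rw [show ((aB ψ).cast : ZMod (p ^ (m-1))) = castq m (aB ψ) from rfl]
  ring

lemma castp_aB_mul (hm : 2 ≤ m) (φ ψ : MulAut (GGt p m n)) :
    castp hm (aB (φ * ψ)) = castp hm (aB φ) * castp hm (aB ψ) := by
  rw [aB_mul_decomp, map_add, castp_torE hm (torE_bB hm φ (cB ψ)), add_zero,
    nsmul_eq_mul, map_mul, map_natCast, ZMod.natCast_val]
  rw [show ((aB ψ).cast : ZMod p) = castp hm (aB ψ) from rfl]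
  ring

/-- the `a`-block as a unit mod `p^(m-1)` -/
def uA (hm : 2 ≤ m) (φ : MulAut (GGt p m n)) : (ZMod (p ^ (m - 1)))ˣ where
  val := castq m (aB φ)
  inv := castq m (aB φ⁻¹)
  val_inv := by rw [← castq_aB_mul hm, mul_inv_cancel, aB_one, map_one]
  inv_val := by rw [← castq_aB_mul hm, inv_mul_cancel, aB_one, map_one]

lemma uA_mul (hm : 2 ≤ m) (φ ψ : MulAut (GGt p m n)) :
    uA hm (φ * ψ) = uA hm φ * uA hm ψ := Units.ext (castq_aB_mul hm φ ψ)

/-- the scalar mod `p` -/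
def sP (hm : 2 ≤ m) (φ : MulAut (GGt p m n)) : ZMod p := castp hm (aB φ)

lemma sP_mul (hm : 2 ≤ m) (φ ψ : MulAut (GGt p m n)) :
    sP hm (φ * ψ) = sP hm φ * sP hm ψ := castp_aB_mul hm φ ψ

lemma sP_one (hm : 2 ≤ m) : sP hm (1 : MulAut (GGt p m n)) = 1 := by
  rw [sP, aB_one, map_one]

lemma sP_inv (hm : 2 ≤ m) (φ : MulAut (GGt p m n)) : sP hm φ * sP hm φ⁻¹ = 1 := by
  rw [← sP_mul hm, mul_inv_cancel, sP_one]

lemma sP_eq_val (hm : 2 ≤ m) (φ : MulAut (GGt p m n)) :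
    sP hm φ = ((aB φ).val : ZMod p) := by
  rw [ZMod.natCast_val]; rfl

/-- the inverse `d`-block -/
def dI (φ : MulAut (GGt p m n)) : (Fin n → ZMod p) → (Fin n → ZMod p) := dB φ⁻¹

lemma dI_add (φ : MulAut (GGt p m n)) (y y' : Fin n → ZMod p) :
    dI φ (y + y') = dI φ y + dI φ y' := dB_add φ⁻¹ y y'

lemma dI_mul (hm : 2 ≤ m) (φ ψ : MulAut (GGt p m n)) (z : Fin n → ZMod p) :
    dI (φ * ψ) z = dI ψ (dI φ z) := by
  unfold dI
  rw [mul_inv_rev, dB_mul hm]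

lemma dI_one (z : Fin n → ZMod p) : dI (1 : MulAut (GGt p m n)) z = z := by
  unfold dI
  rw [inv_one, dB_one]

/-- the linear action on the `Hol((C_p)^n)` part -/
def Em (hm : 2 ≤ m) (φ : MulAut (GGt p m n)) (y : Fin n → ZMod p) : Fin n → ZMod p :=
  fun i => sP hm φ * ∑ j, y j * dI φ (eV p n i) j

lemma Em_add (hm : 2 ≤ m) (φ : MulAut (GGt p m n)) (y y' : Fin n → ZMod p) :
    Em hm φ (y + y') = Em hm φ y + Em hm φ y' := by
  funext i
  show sP hm φ * ∑ j, (y j + y' j) * dI φ (eV p n i) j = _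
  rw [show (Em hm φ y + Em hm φ y') i = Em hm φ y i + Em hm φ y' i from rfl]
  unfold Em
  rw [← mul_add, ← Finset.sum_add_distrib]
  congr 1
  refine Finset.sum_congr rfl fun j _ => by ring

lemma Em_one (hm : 2 ≤ m) (y : Fin n → ZMod p) : Em hm (1 : MulAut (GGt p m n)) y = y := by
  funext i
  show sP hm 1 * ∑ j, y j * dI 1 (eV p n i) j = y i
  rw [sP_one hm]
  simp only [dI_one]
  rw [one_mul, sum_single_mul]

lemma Em_mul (hm : 2 ≤ m) (φ ψ : MulAut (GGt p m n)) (y : Fin n → ZMod p) :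
    Em hm (φ * ψ) y = Em hm φ (Em hm ψ y) := by
  funext i
  have hw : dI (φ * ψ) (eV p n i) = dI ψ (dI φ (eV p n i)) := dI_mul hm φ ψ _
  set w := dI φ (eV p n i) with hwdef
  have hexp : dI ψ w = ∑ t, (w t).val • dI ψ (eV p n t) := map_expand (dI ψ) (dI_add ψ) w
  show sP hm (φ * ψ) * ∑ j, y j * dI (φ * ψ) (eV p n i) j
      = sP hm φ * ∑ j, (Em hm ψ y) j * w j
  rw [hw, hexp, sP_mul hm]
  have hrhs : ∀ j, (Em hm ψ y) j = sP hm ψ * ∑ k, y k * dI ψ (eV p n j) k := fun j => rfl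
  simp only [hrhs, Finset.sum_apply, Pi.smul_apply]
  simp only [nsmul_eq_mul, ZMod.natCast_val, ZMod.cast_id, Finset.mul_sum, Finset.sum_mul]
  rw [Finset.sum_comm]
  refine Finset.sum_congr rfl fun j _ => Finset.sum_congr rfl fun t _ => by ring
/-- the `u`-functional -/
def ufun (hm : 2 ≤ m) (φ : MulAut (GGt p m n)) (z : Fin n → ZMod p) : ZMod p :=
  qu m (bB φ (dI φ z))

lemma ufun_add (hm : 2 ≤ m) (φ : MulAut (GGt p m n)) (z z' : Fin n → ZMod p) :
    ufun hm φ (z + z') = ufun hm φ z + ufun hm φ z' := by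
  unfold ufun
  rw [dI_add, bB_add]
  exact qu_add hm (torE_bB hm φ _) (torE_bB hm φ _)

lemma ufun_mul (hm : 2 ≤ m) (φ ψ : MulAut (GGt p m n)) (z : Fin n → ZMod p) :
    ufun hm (φ * ψ) z = sP hm φ * ufun hm ψ (dI φ z) + ufun hm φ z := by
  unfold ufun
  rw [dI_mul hm]
  have h1 : bB (φ * ψ) (dI ψ (dI φ z))
      = (bB ψ (dI ψ (dI φ z))).val • aB φ + bB φ (dI φ z) := by
    show (apA (φ * ψ) (0, dI ψ (dI φ z))).1 = _
    rw [apA_mul, apA_V_eq ψ, apA_decomp]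
    have h2 : dB ψ (dI ψ (dI φ z)) = dI φ z := dB_inv_right hm ψ _
    rw [h2]
    rfl
  rw [h1]
  have htor1 : TorE m ((bB ψ (dI ψ (dI φ z))).val • aB φ) := by
    rw [nsmul_eq_mul, ZMod.natCast_val, ZMod.cast_id, mul_comm]
    exact torE_mul hm _ (torE_bB hm ψ _)
  rw [qu_add hm htor1 (torE_bB hm φ _)]
  congr 1
  rw [nsmul_eq_mul, ZMod.natCast_val, ZMod.cast_id, mul_comm, qu_mul hm _ (torE_bB hm ψ _),
    ← sP_eq_val hm]

/-- the translation vector of the `Hol((C_p)^n)`-component -/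
def uv (hm : 2 ≤ m) (φ : MulAut (GGt p m n)) : Fin n → ZMod p :=
  fun i => ufun hm φ (eV p n i)

lemma ufun_expand (hm : 2 ≤ m) (φ : MulAut (GGt p m n)) (z : Fin n → ZMod p) :
    ufun hm φ z = ∑ j, z j * ufun hm φ (eV p n j) := by
  rw [map_expand (ufun hm φ) (ufun_add hm φ) z]
  refine Finset.sum_congr rfl fun j _ => ?_
  rw [nsmul_eq_mul, ZMod.natCast_val, ZMod.cast_id]

lemma uv_one (hm : 2 ≤ m) : uv hm (1 : MulAut (GGt p m n)) = 0 := by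
  funext i
  show qu m (bB 1 (dI 1 (eV p n i))) = 0
  rw [dI_one]
  show qu m ((0 : ZMod (p ^ m))) = 0
  exact qu_zero

lemma uv_mul (hm : 2 ≤ m) (φ ψ : MulAut (GGt p m n)) :
    uv hm (φ * ψ) = uv hm φ + Em hm φ (uv hm ψ) := by
  funext i
  show ufun hm (φ * ψ) (eV p n i) = uv hm φ i + Em hm φ (uv hm ψ) i
  rw [ufun_mul hm, ufun_expand hm ψ (dI φ (eV p n i))]
  show sP hm φ * ∑ j, dI φ (eV p n i) j * ufun hm ψ (eV p n j) + ufun hm φ (eV p n i)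
      = ufun hm φ (eV p n i) + sP hm φ * ∑ j, uv hm ψ j * dI φ (eV p n i) j
  rw [add_comm]
  congr 2
  refine Finset.sum_congr rfl fun j _ => ?_
  rw [mul_comm]
  rfl

/-- `Em` as an additive automorphism -/
def EmEquiv (hm : 2 ≤ m) (φ : MulAut (GGt p m n)) : (Fin n → ZMod p) ≃+ (Fin n → ZMod p) :=
  AddEquiv.mk' ⟨Em hm φ, Em hm φ⁻¹,
    fun y => by rw [← Em_mul hm, inv_mul_cancel, Em_one hm],
    fun y => by rw [← Em_mul hm, mul_inv_cancel, Em_one hm]⟩ (Em_add hm φ)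

/-- `Em` as a multiplicative automorphism -/
def EAut (hm : 2 ≤ m) (φ : MulAut (GGt p m n)) :
    MulAut (Multiplicative (Fin n → ZMod p)) :=
  AddEquiv.toMultiplicative (EmEquiv hm φ)

lemma EAut_apply (hm : 2 ≤ m) (φ : MulAut (GGt p m n)) (y : Fin n → ZMod p) :
    EAut hm φ (Multiplicative.ofAdd y) = Multiplicative.ofAdd (Em hm φ y) := rfl

lemma EAut_mul (hm : 2 ≤ m) (φ ψ : MulAut (GGt p m n)) :
    EAut hm (φ * ψ) = EAut hm φ * EAut hm ψ := by
  refine MulEquiv.ext fun z => ?_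
  show Multiplicative.ofAdd (Em hm (φ * ψ) z.toAdd) = Multiplicative.ofAdd (Em hm φ (Em hm ψ z.toAdd))
  rw [Em_mul hm]

lemma EAut_one (hm : 2 ≤ m) : EAut hm (1 : MulAut (GGt p m n)) = 1 := by
  refine MulEquiv.ext fun z => ?_
  show Multiplicative.ofAdd (Em hm 1 z.toAdd) = z
  rw [Em_one hm]
  rfl

/-- multiplication by a unit as `MulAut` of `Multiplicative (ZMod k)` -/
def mAutQ {k : ℕ} (u : (ZMod k)ˣ) : MulAut (Multiplicative (ZMod k)) :=
  AddEquiv.toMultiplicative (AddAut.mulLeft u)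

lemma mAutQ_apply {k : ℕ} (u : (ZMod k)ˣ) (z : ZMod k) :
    mAutQ u (Multiplicative.ofAdd z) = Multiplicative.ofAdd ((u : ZMod k) * z) := rfl

lemma mAutQ_mul {k : ℕ} (u v : (ZMod k)ˣ) : mAutQ (u * v) = mAutQ u * mAutQ v := by
  refine MulEquiv.ext fun z => ?_
  show Multiplicative.ofAdd (((u * v : (ZMod k)ˣ) : ZMod k) * z.toAdd)
      = Multiplicative.ofAdd ((u : ZMod k) * ((v : ZMod k) * z.toAdd))
  rw [Units.val_mul, mul_assoc]

lemma mAutQ_one {k : ℕ} : mAutQ (1 : (ZMod k)ˣ) = 1 := by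
  refine MulEquiv.ext fun z => ?_
  show Multiplicative.ofAdd (((1 : (ZMod k)ˣ) : ZMod k) * z.toAdd) = z
  rw [Units.val_one, one_mul]
  rfl
abbrev HolG (p m n : ℕ) : Type := Hol (GGt p m n)
abbrev TV (p n : ℕ) : Type := Hol (Multiplicative (Fin n → ZMod p))
abbrev TQ (p m : ℕ) : Type := Hol (Multiplicative (ZMod (p ^ (m - 1))))

def hleft (h : HolG p m n) : GGt p m n := SemidirectProduct.left h
def hright (h : HolG p m n) : MulAut (GGt p m n) := SemidirectProduct.right h

lemma hleft_mul (a b : HolG p m n) :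
    hleft (a * b) = hleft a * (hright a) (hleft b) := rfl

lemma hright_mul (a b : HolG p m n) :
    hright (a * b) = hright a * hright b := rfl

lemma hol_ext {a b : HolG p m n} (h1 : hleft a = hleft b) (h2 : hright a = hright b) :
    a = b := SemidirectProduct.ext h1 h2

lemma toAdd_action (φ : MulAut (GGt p m n)) (g : GGt p m n) :
    (φ g).toAdd = apA φ g.toAdd := rfl

lemma castq_apA_fst (hm : 2 ≤ m) (φ : MulAut (GGt p m n)) (g : GAt p m n) :
    castq m ((apA φ g).1) = castq m (aB φ) * castq m (g.1) := by
  have h : apA φ g = apA φ (g.1, g.2) := rfl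
  rw [h, apA_decomp]
  have h2 : ((g.1.val • apA φ (1, 0) + apA φ (0, g.2)).1)
      = g.1.val • aB φ + bB φ g.2 := rfl
  rw [h2, map_add, castq_torE hm (torE_bB hm φ g.2), add_zero, nsmul_eq_mul, map_mul,
    map_natCast, ZMod.natCast_val]
  rw [show ((g.1).cast : ZMod (p ^ (m-1))) = castq m (g.1) from rfl]
  ring

/-- first component of `Θ` -/
def Theta1 (hm : 2 ≤ m) : HolG p m n →* TV p n :=
  MonoidHom.mk' (fun h => ⟨Multiplicative.ofAdd (uv hm (hright h)), EAut hm (hright h)⟩)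
    (by
      intro a b
      refine SemidirectProduct.ext ?_ ?_
      · show Multiplicative.ofAdd (uv hm (hright (a * b)))
          = Multiplicative.ofAdd (uv hm (hright a)) * (EAut hm (hright a)) (Multiplicative.ofAdd (uv hm (hright b)))
        rw [hright_mul, uv_mul hm, EAut_apply, ← ofAdd_add]
      · show EAut hm (hright (a * b)) = EAut hm (hright a) * EAut hm (hright b)
        rw [hright_mul, EAut_mul hm])

/-- second component of `Θ` -/
def Theta2 (hm : 2 ≤ m) : HolG p m n →* TQ p m :=
  MonoidHom.mk' (fun h => ⟨Multiplicative.ofAdd (castq m ((hleft h).toAdd.1)), mAutQ (uA hm (hright h))⟩)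
    (by
      intro a b
      refine SemidirectProduct.ext ?_ ?_
      · show Multiplicative.ofAdd (castq m ((hleft (a * b)).toAdd.1))
          = Multiplicative.ofAdd (castq m ((hleft a).toAdd.1))
            * (mAutQ (uA hm (hright a))) (Multiplicative.ofAdd (castq m ((hleft b).toAdd.1)))
        rw [hleft_mul, mAutQ_apply, ← ofAdd_add]
        congr 1
        have h1 : ((hleft a * (hright a) (hleft b)).toAdd).1
            = (hleft a).toAdd.1 + (apA (hright a) (hleft b).toAdd).1 := rfl
        rw [h1, map_add, castq_apA_fst hm]
        rfl
      · show mAutQ (uA hm (hright (a * b))) = mAutQ (uA hm (hright a)) * mAutQ (uA hm (hright b))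
        rw [hright_mul, uA_mul hm, mAutQ_mul])

/-- the homomorphism `Θ : Hol(C_{p^m} × (C_p)^n) → Hol((C_p)^n) × Hol(C_{p^(m-1)})` -/
def Theta (hm : 2 ≤ m) : HolG p m n →* TV p n × TQ p m :=
  MonoidHom.prod (Theta1 hm) (Theta2 hm)
/-- notation shortcut: the image of `p^(m-1)` in `ZMod (p^m)` -/
def qc (p m : ℕ) : ZMod (p ^ m) := ((p ^ (m - 1) : ℕ) : ZMod (p ^ m))

lemma castp_qc_mul (hm : 2 ≤ m) (x : ZMod (p ^ m)) : castp hm (qc p m * x) = 0 := by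
  rw [map_mul, qc, castp_natCast_q hm, zero_mul]

lemma castq_qc_mul (hm : 2 ≤ m) (x : ZMod (p ^ m)) : castq m (qc p m * x) = 0 := by
  rw [map_mul, qc, castq_natCast_q hm, zero_mul]

lemma qc_mul_qc (hm : 2 ≤ m) (x y : ZMod (p ^ m)) : (qc p m * x) * (qc p m * y) = 0 := by
  have h : (qc p m * x) * (qc p m * y) = (qc p m * qc p m) * (x * y) := by ring
  rw [h, qc, qq_zero hm, zero_mul]

lemma torE_qc_mul (hm : 2 ≤ m) (x : ZMod (p ^ m)) : TorE m (qc p m * x) := by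
  refine ⟨x.val, ?_⟩
  rw [qc, Nat.cast_mul, ZMod.natCast_val, ZMod.cast_id]

lemma q_upc_add (hm : 2 ≤ m) (t t' : ZMod p) :
    qc p m * upc m (t + t') = qc p m * upc m t + qc p m * upc m t' := by
  unfold upc
  rw [ZMod.val_add]
  rw [show qc p m = ((p ^ (m - 1) : ℕ) : ZMod (p ^ m)) from rfl, q_cast_mod hm]
  push_cast
  ring

lemma qu_qc_upc (hm : 2 ≤ m) (t : ZMod p) : qu m (qc p m * upc m t) = t := qu_q_upc hm t

/-- the stability automorphisms -/
def alF (hm : 2 ≤ m) (t : ZMod p) (c : Fin n → ZMod p) (g : GAt p m n) : GAt p m n :=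
  (g.1 + qc p m * upc m t * g.1, g.2 + castp hm g.1 • c)

lemma alF_comp (hm : 2 ≤ m) (t t' : ZMod p) (c c' : Fin n → ZMod p) (g : GAt p m n) :
    alF hm t c (alF hm t' c' g) = alF hm (t + t') (c + c') g := by
  unfold alF
  refine Prod.ext ?_ ?_
  · show g.1 + qc p m * upc m t' * g.1 + qc p m * upc m t * (g.1 + qc p m * upc m t' * g.1)
      = g.1 + qc p m * upc m (t + t') * g.1
    rw [q_upc_add hm]
    have h0 : qc p m * upc m t * (qc p m * upc m t' * g.1) = 0 := by
      have := qc_mul_qc hm (upc m t) (upc m t' * g.1)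
      rw [← this]; ring
    rw [mul_add]
    rw [h0]
    ring
  · show g.2 + castp hm g.1 • c' + castp hm (g.1 + qc p m * upc m t' * g.1) • c
      = g.2 + castp hm g.1 • (c + c')
    rw [mul_assoc (qc p m) (upc m t') g.1]
    rw [map_add, castp_qc_mul hm, add_zero, smul_add]
    abel

lemma alF_zero_zero (hm : 2 ≤ m) (g : GAt p m n) : alF hm 0 0 g = g := by
  unfold alF
  rw [upc_zero, mul_zero, zero_mul, add_zero, smul_zero, add_zero]

lemma alF_add (hm : 2 ≤ m) (t : ZMod p) (c : Fin n → ZMod p) (g g' : GAt p m n) :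
    alF hm t c (g + g') = alF hm t c g + alF hm t c g' := by
  unfold alF
  refine Prod.ext ?_ ?_
  · show g.1 + g'.1 + qc p m * upc m t * (g.1 + g'.1) = _
    show _ = g.1 + qc p m * upc m t * g.1 + (g'.1 + qc p m * upc m t * g'.1)
    ring
  · show g.2 + g'.2 + castp hm (g.1 + g'.1) • c = _
    show _ = g.2 + castp hm g.1 • c + (g'.2 + castp hm g'.1 • c)
    rw [map_add, add_smul]
    abel

/-- `alF` as additive automorphism -/
def alE (hm : 2 ≤ m) (t : ZMod p) (c : Fin n → ZMod p) : GAt p m n ≃+ GAt p m n :=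
  AddEquiv.mk' ⟨alF hm t c, alF hm (-t) (-c),
    fun g => by rw [alF_comp hm, neg_add_cancel, neg_add_cancel, alF_zero_zero hm],
    fun g => by rw [alF_comp hm, add_neg_cancel, add_neg_cancel, alF_zero_zero hm]⟩
    (alF_add hm t c)

/-- `alF` as multiplicative automorphism -/
def alC (hm : 2 ≤ m) (t : ZMod p) (c : Fin n → ZMod p) : MulAut (GGt p m n) :=
  AddEquiv.toMultiplicative (alE hm t c)

lemma apA_alC (hm : 2 ≤ m) (t : ZMod p) (c : Fin n → ZMod p) (g : GAt p m n) :
    apA (alC hm t c) g = alF hm t c g := rfl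

lemma alC_mul (hm : 2 ≤ m) (t t' : ZMod p) (c c' : Fin n → ZMod p) :
    alC hm t c * alC hm t' c' = alC hm (t + t') (c + c') := by
  refine MulEquiv.ext fun z => ?_
  show Multiplicative.ofAdd (alF hm t c (alF hm t' c' z.toAdd))
      = Multiplicative.ofAdd (alF hm (t + t') (c + c') z.toAdd)
  rw [alF_comp hm]

abbrev WWt (p n : ℕ) : Type := (ZMod p × (Fin n → ZMod p)) × (ZMod p × (Fin n → ZMod p))

/-- parametrization of the kernel -/
def PhiF (hm : 2 ≤ m) (w : WWt p n) : HolG p m n :=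
  ⟨Multiplicative.ofAdd (qc p m * upc m w.1.1, w.1.2), alC hm w.2.1 w.2.2⟩

lemma alF_fixes (hm : 2 ≤ m) (t t' : ZMod p) (c : Fin n → ZMod p) (y : Fin n → ZMod p) :
    alF hm t c (qc p m * upc m t', y) = (qc p m * upc m t', y) := by
  unfold alF
  refine Prod.ext ?_ ?_
  · show qc p m * upc m t' + qc p m * upc m t * (qc p m * upc m t') = qc p m * upc m t'
    rw [qc_mul_qc hm, add_zero]
  · show y + castp hm (qc p m * upc m t') • c = y
    rw [castp_qc_mul hm, zero_smul, add_zero]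

/-- the kernel parametrization as a homomorphism -/
def Phi (hm : 2 ≤ m) : Multiplicative (WWt p n) →* HolG p m n :=
  MonoidHom.mk' (fun w => PhiF hm w.toAdd)
    (by
      intro a b
      refine SemidirectProduct.ext ?_ ?_
      · show Multiplicative.ofAdd (qc p m * upc m (a.toAdd.1.1 + b.toAdd.1.1), a.toAdd.1.2 + b.toAdd.1.2)
          = Multiplicative.ofAdd ((qc p m * upc m a.toAdd.1.1, a.toAdd.1.2)
              + alF hm a.toAdd.2.1 a.toAdd.2.2 (qc p m * upc m b.toAdd.1.1, b.toAdd.1.2))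
        rw [alF_fixes hm]
        congr 1
        refine Prod.ext ?_ ?_
        · show qc p m * upc m (a.toAdd.1.1 + b.toAdd.1.1) = qc p m * upc m a.toAdd.1.1 + qc p m * upc m b.toAdd.1.1
          exact q_upc_add hm _ _
        · rfl
      · show alC hm (a.toAdd.2.1 + b.toAdd.2.1) (a.toAdd.2.2 + b.toAdd.2.2)
          = alC hm a.toAdd.2.1 a.toAdd.2.2 * alC hm b.toAdd.2.1 b.toAdd.2.2
        rw [alC_mul hm])

lemma Phi_injective (hm : 2 ≤ m) : Function.Injective (Phi (p := p) (n := n) hm) := by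
  rw [injective_iff_map_eq_one]
  intro w hw
  have h1 : hleft (Phi hm w) = 1 := by rw [hw]; rfl
  have h2 : hright (Phi hm w) = 1 := by rw [hw]; rfl
  have hg : (qc p m * upc m w.toAdd.1.1, w.toAdd.1.2) = ((0 : ZMod (p ^ m)), (0 : Fin n → ZMod p)) := by
    have := congrArg Multiplicative.toAdd h1
    exact this
  have ht1 : w.toAdd.1.1 = 0 := by
    have h0 : qc p m * upc m w.toAdd.1.1 = 0 := congrArg Prod.fst hg
    have h3 : qu m (qc p m * upc m w.toAdd.1.1) = qu m 0 := by rw [h0]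
    rw [qu_qc_upc hm, qu_zero] at h3
    exact h3
  have hy : w.toAdd.1.2 = 0 := congrArg Prod.snd hg
  have hal : alF hm w.toAdd.2.1 w.toAdd.2.2 ((1 : ZMod (p ^ m)), (0 : Fin n → ZMod p)) = (1, 0) := by
    have := congrArg (fun (ψ : MulAut (GGt p m n)) => apA ψ (1, 0)) h2
    exact this
  have hc : w.toAdd.2.2 = 0 := by
    have h4 := congrArg Prod.snd hal
    show w.toAdd.2.2 = 0
    have h5 : (0 : Fin n → ZMod p) + castp hm (1 : ZMod (p ^ m)) • w.toAdd.2.2 = 0 := h4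
    rw [map_one, one_smul, zero_add] at h5
    exact h5
  have ht2 : w.toAdd.2.1 = 0 := by
    have h4 := congrArg Prod.fst hal
    have h5 : (1 : ZMod (p ^ m)) + qc p m * upc m w.toAdd.2.1 * 1 = 1 := h4
    rw [mul_one] at h5
    have h6 : qc p m * upc m w.toAdd.2.1 = 0 := by linear_combination h5
    have h7 : qu m (qc p m * upc m w.toAdd.2.1) = qu m 0 := by rw [h6]
    rw [qu_qc_upc hm, qu_zero] at h7
    exact h7
  show w = 1
  have : w.toAdd = 0 := by
    refine Prod.ext (Prod.ext ?_ ?_) (Prod.ext ?_ ?_) <;> assumption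
  exact this
lemma alC_blocks_bB (hm : 2 ≤ m) (t : ZMod p) (c : Fin n → ZMod p) (y : Fin n → ZMod p) :
    bB (alC hm t c) y = 0 := by
  show (alF hm t c (0, y)).1 = 0
  show (0 : ZMod (p ^ m)) + qc p m * upc m t * 0 = 0
  rw [mul_zero, add_zero]

lemma alC_blocks_dB (hm : 2 ≤ m) (t : ZMod p) (c : Fin n → ZMod p) (y : Fin n → ZMod p) :
    dB (alC hm t c) y = y := by
  show (alF hm t c (0, y)).2 = y
  show y + castp hm (0 : ZMod (p ^ m)) • c = y
  rw [map_zero, zero_smul, add_zero]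

lemma alC_blocks_aB (hm : 2 ≤ m) (t : ZMod p) (c : Fin n → ZMod p) :
    aB (alC hm t c) = 1 + qc p m * upc m t := by
  show (alF hm t c (1, 0)).1 = _
  show (1 : ZMod (p ^ m)) + qc p m * upc m t * 1 = _
  rw [mul_one]

lemma alC_zero_zero (hm : 2 ≤ m) : alC (p := p) (n := n) hm 0 0 = 1 := by
  refine MulEquiv.ext fun z => ?_
  show Multiplicative.ofAdd (alF hm 0 0 z.toAdd) = z
  rw [alF_zero_zero hm]
  rfl

lemma alC_inv (hm : 2 ≤ m) (t : ZMod p) (c : Fin n → ZMod p) :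
    (alC hm t c)⁻¹ = alC hm (-t) (-c) := by
  refine inv_eq_of_mul_eq_one_right ?_
  rw [alC_mul hm, add_neg_cancel, add_neg_cancel, alC_zero_zero hm]

lemma alC_blocks_dI (hm : 2 ≤ m) (t : ZMod p) (c : Fin n → ZMod p) (y : Fin n → ZMod p) :
    dI (alC hm t c) y = y := by
  unfold dI
  rw [alC_inv hm, alC_blocks_dB hm]

lemma alC_uv (hm : 2 ≤ m) (t : ZMod p) (c : Fin n → ZMod p) :
    uv hm (alC hm t c) = 0 := by
  funext i
  show qu m (bB (alC hm t c) (dI (alC hm t c) (eV p n i))) = 0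
  rw [alC_blocks_bB hm, qu_zero]

lemma alC_sP (hm : 2 ≤ m) (t : ZMod p) (c : Fin n → ZMod p) :
    sP hm (alC hm t c) = 1 := by
  rw [sP, alC_blocks_aB hm, map_add, map_one, castp_qc_mul hm, add_zero]

lemma alC_EAut (hm : 2 ≤ m) (t : ZMod p) (c : Fin n → ZMod p) :
    EAut hm (alC hm t c) = 1 := by
  refine MulEquiv.ext fun z => ?_
  show Multiplicative.ofAdd (Em hm (alC hm t c) z.toAdd) = z
  have h : Em hm (alC hm t c) z.toAdd = z.toAdd := by
    funext i
    show sP hm (alC hm t c) * ∑ j, z.toAdd j * dI (alC hm t c) (eV p n i) j = z.toAdd i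
    rw [alC_sP hm]
    simp only [alC_blocks_dI hm]
    rw [one_mul, sum_single_mul]
  rw [h]
  rfl

lemma alC_uA (hm : 2 ≤ m) (t : ZMod p) (c : Fin n → ZMod p) :
    uA hm (alC hm t c) = 1 := by
  refine Units.ext ?_
  show castq m (aB (alC hm t c)) = 1
  rw [alC_blocks_aB hm, map_add, map_one, castq_qc_mul hm, add_zero]

lemma range_le_ker (hm : 2 ≤ m) : (Phi (p := p) (n := n) hm).range ≤ (Theta hm).ker := by
  rintro h ⟨w, rfl⟩
  rw [MonoidHom.mem_ker]
  refine Prod.ext ?_ ?_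
  · show Theta1 hm (Phi hm w) = 1
    refine SemidirectProduct.ext ?_ ?_
    · show Multiplicative.ofAdd (uv hm (hright (Phi hm w))) = 1
      have : hright (Phi hm w) = alC hm w.toAdd.2.1 w.toAdd.2.2 := rfl
      rw [this, alC_uv hm]
      rfl
    · show EAut hm (hright (Phi hm w)) = 1
      have : hright (Phi hm w) = alC hm w.toAdd.2.1 w.toAdd.2.2 := rfl
      rw [this, alC_EAut hm]
  · show Theta2 hm (Phi hm w) = 1
    refine SemidirectProduct.ext ?_ ?_
    · show Multiplicative.ofAdd (castq m ((hleft (Phi hm w)).toAdd.1)) = 1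
      have : (hleft (Phi hm w)).toAdd.1 = qc p m * upc m w.toAdd.1.1 := rfl
      rw [this, castq_qc_mul hm]
      rfl
    · show mAutQ (uA hm (hright (Phi hm w))) = 1
      have : hright (Phi hm w) = alC hm w.toAdd.2.1 w.toAdd.2.2 := rfl
      rw [this, alC_uA hm, mAutQ_one]

lemma val_smul_eq_castp_smul (hm : 2 ≤ m) (x : ZMod (p ^ m)) (v : Fin n → ZMod p) :
    x.val • v = castp hm x • v := by
  funext i
  rw [Pi.smul_apply, Pi.smul_apply, nsmul_eq_mul, ZMod.natCast_val, smul_eq_mul]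
  rfl

lemma ker_le_range (hm : 2 ≤ m) : (Theta hm).ker ≤ (Phi (p := p) (n := n) hm).range := by
  intro h hh
  rw [MonoidHom.mem_ker] at hh
  set φ := hright h with hφ
  set g := (hleft h).toAdd with hg
  have h1 : Theta1 hm h = 1 := congrArg Prod.fst hh
  have h2 : Theta2 hm h = 1 := congrArg Prod.snd hh
  -- extract the four conditions
  have huv : uv hm φ = 0 := by
    have := congrArg SemidirectProduct.left h1
    have h3 : Multiplicative.ofAdd (uv hm φ) = 1 := this
    exact ofAdd_eq_one.mp h3
  have hEm : ∀ y : Fin n → ZMod p, Em hm φ y = y := by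
    intro y
    have := congrArg SemidirectProduct.right h1
    have h3 : EAut hm φ = 1 := this
    have h4 : EAut hm φ (Multiplicative.ofAdd y) = Multiplicative.ofAdd y := by rw [h3]; rfl
    exact h4
  have hcq : castq m g.1 = 0 := by
    have := congrArg SemidirectProduct.left h2
    have h3 : Multiplicative.ofAdd (castq m g.1) = 1 := this
    exact ofAdd_eq_one.mp h3
  have haB : castq m (aB φ) = 1 := by
    have := congrArg SemidirectProduct.right h2
    have h3 : mAutQ (uA hm φ) = 1 := this
    have h4 : mAutQ (uA hm φ) (Multiplicative.ofAdd (1 : ZMod (p ^ (m - 1))))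
        = Multiplicative.ofAdd (1 : ZMod (p ^ (m - 1))) := by rw [h3]; rfl
    have h5 : ((uA hm φ : (ZMod (p ^ (m - 1)))ˣ) : ZMod (p ^ (m - 1))) * 1 = 1 := by
      have := congrArg Multiplicative.toAdd h4
      exact this
    rw [mul_one] at h5
    exact h5
  -- derive block structure
  have htorA : TorE m (aB φ - 1) := by
    refine torE_of_castq hm ?_
    rw [map_sub, haB, map_one, sub_self]
  have hsP : sP hm φ = 1 := by
    have h6 : castp hm (aB φ - 1) = 0 := castp_torE hm htorA
    rw [map_sub, map_one, sub_eq_zero] at h6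
    exact h6
  have hdI : ∀ z, dI φ z = z := by
    have hbasis : ∀ i, dI φ (eV p n i) = eV p n i := by
      intro i
      funext k
      have h7 := congrFun (hEm (eV p n k)) i
      have h8 : sP hm φ * ∑ j, eV p n k j * dI φ (eV p n i) j = eV p n k i := h7
      rw [hsP, one_mul] at h8
      have h9 : ∑ j, eV p n k j * dI φ (eV p n i) j = dI φ (eV p n i) k := by
        rw [show ∑ j, eV p n k j * dI φ (eV p n i) j = ∑ j, dI φ (eV p n i) j * eV p n k j from
          Finset.sum_congr rfl fun j _ => mul_comm _ _]
        exact sum_single_mul _ k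
      rw [h9] at h8
      rw [h8]
      unfold eV
      rw [Pi.single_apply, Pi.single_apply]
      exact if_congr eq_comm rfl rfl
    intro z
    rw [map_expand (dI φ) (dI_add φ) z]
    conv_rhs => rw [← vec_expand (p := p) z]
    exact Finset.sum_congr rfl fun i _ => by rw [hbasis]
  have hdB : ∀ z, dB φ z = z := by
    intro z
    have := dB_inv_left hm φ z
    rw [show dB φ⁻¹ (dB φ z) = dI φ (dB φ z) from rfl, hdI] at this
    exact this
  have hbB : ∀ z, bB φ z = 0 := by
    intro z
    have h10 : ufun hm φ z = 0 := by
      rw [ufun_expand hm φ z]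
      refine Finset.sum_eq_zero fun j _ => ?_
      have : ufun hm φ (eV p n j) = 0 := congrFun huv j
      rw [this, mul_zero]
    have h11 : qu m (bB φ z) = 0 := by
      have : ufun hm φ z = qu m (bB φ (dI φ z)) := rfl
      rw [this, hdI] at h10
      exact h10
    exact qu_eq_zero hm (torE_bB hm φ z) h11
  have htorg : TorE m g.1 := torE_of_castq hm hcq
  set t2 := qu m (aB φ - 1) with ht2
  have haBdecomp : aB φ = 1 + qc p m * upc m t2 := by
    have := tor_decomp hm htorA
    rw [show ((p ^ (m - 1) : ℕ) : ZMod (p ^ m)) = qc p m from rfl] at this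
    linear_combination this
  have hphi : φ = alC hm t2 (cB φ) := by
    refine MulEquiv.ext fun z => ?_
    show Multiplicative.ofAdd (apA φ z.toAdd) = Multiplicative.ofAdd (alF hm t2 (cB φ) z.toAdd)
    congr 1
    obtain ⟨x, y⟩ := z.toAdd
    rw [apA_decomp, apA_A_eq, apA_V_eq, hbB, hdB]
    refine Prod.ext ?_ ?_
    · show x.val • aB φ + 0 = x + qc p m * upc m t2 * x
      rw [add_zero, nsmul_eq_mul, ZMod.natCast_val, ZMod.cast_id, haBdecomp]
      ring
    · show x.val • cB φ + y = y + castp hm x • cB φ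
      rw [val_smul_eq_castp_smul hm]
      abel
  refine ⟨Multiplicative.ofAdd ((qu m g.1, g.2), (t2, cB φ)), ?_⟩
  refine SemidirectProduct.ext ?_ ?_
  · show Multiplicative.ofAdd (qc p m * upc m (qu m g.1), g.2) = hleft h
    have hgg : (hleft h) = Multiplicative.ofAdd g := rfl
    rw [hgg]
    congr 1
    refine Prod.ext ?_ rfl
    · show qc p m * upc m (qu m g.1) = g.1
      have := tor_decomp hm htorg
      rw [show ((p ^ (m - 1) : ℕ) : ZMod (p ^ m)) = qc p m from rfl] at this
      exact this.symm
  · show alC hm t2 (cB φ) = hright h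
    rw [← hφ]
    exact hphi.symm
lemma toM_inv (e : GAt p m n ≃+ GAt p m n) :
    (AddEquiv.toMultiplicative e : MulAut (GGt p m n))⁻¹ = AddEquiv.toMultiplicative e.symm := by
  rw [MulAut.inv_def]
  rfl

/- ## generator 1 : upper unipotent -/

def ubF (hm : 2 ≤ m) (v : Fin n → ZMod p) (g : GAt p m n) : GAt p m n :=
  (g.1 + qc p m * upc m (∑ j, v j * g.2 j), g.2)

lemma ubF_comp (hm : 2 ≤ m) (v v' : Fin n → ZMod p) (g : GAt p m n) :
    ubF hm v (ubF hm v' g) = ubF hm (v + v') g := by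
  unfold ubF
  refine Prod.ext ?_ rfl
  show g.1 + qc p m * upc m (∑ j, v' j * g.2 j) + qc p m * upc m (∑ j, v j * g.2 j)
      = g.1 + qc p m * upc m (∑ j, (v + v') j * g.2 j)
  rw [show ∑ j, (v + v') j * g.2 j = (∑ j, v j * g.2 j) + ∑ j, v' j * g.2 j from by
    rw [← Finset.sum_add_distrib]; exact Finset.sum_congr rfl fun j _ => by
      show (v j + v' j) * g.2 j = _; ring]
  rw [q_upc_add hm]
  ring

lemma ubF_zero (hm : 2 ≤ m) (g : GAt p m n) : ubF hm 0 g = g := by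
  unfold ubF
  refine Prod.ext ?_ rfl
  show g.1 + qc p m * upc m (∑ j, (0 : ZMod p) * g.2 j) = g.1
  have h : (∑ j, (0 : ZMod p) * g.2 j) = 0 := Finset.sum_eq_zero fun j _ => zero_mul _
  rw [h, upc_zero, mul_zero, add_zero]

lemma ubF_add (hm : 2 ≤ m) (v : Fin n → ZMod p) (g g' : GAt p m n) :
    ubF hm v (g + g') = ubF hm v g + ubF hm v g' := by
  unfold ubF
  refine Prod.ext ?_ rfl
  show g.1 + g'.1 + qc p m * upc m (∑ j, v j * (g.2 j + g'.2 j)) = _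
  show _ = g.1 + qc p m * upc m (∑ j, v j * g.2 j) + (g'.1 + qc p m * upc m (∑ j, v j * g'.2 j))
  rw [show ∑ j, v j * (g.2 j + g'.2 j) = (∑ j, v j * g.2 j) + ∑ j, v j * g'.2 j from by
    rw [← Finset.sum_add_distrib]; exact Finset.sum_congr rfl fun j _ => by ring]
  rw [q_upc_add hm]
  ring

def ubE (hm : 2 ≤ m) (v : Fin n → ZMod p) : GAt p m n ≃+ GAt p m n :=
  AddEquiv.mk' ⟨ubF hm v, ubF hm (-v),
    fun g => by rw [ubF_comp hm, neg_add_cancel, ubF_zero hm],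
    fun g => by rw [ubF_comp hm, add_neg_cancel, ubF_zero hm]⟩ (ubF_add hm v)

def ubAut (hm : 2 ≤ m) (v : Fin n → ZMod p) : MulAut (GGt p m n) :=
  AddEquiv.toMultiplicative (ubE hm v)

lemma ubAut_dI (hm : 2 ≤ m) (v : Fin n → ZMod p) (y : Fin n → ZMod p) :
    dI (ubAut hm v) y = y := by
  show (apA (ubAut hm v)⁻¹ (0, y)).2 = y
  rw [show (ubAut hm v)⁻¹ = AddEquiv.toMultiplicative (ubE hm v).symm from toM_inv _]
  rfl

lemma ubAut_aB (hm : 2 ≤ m) (v : Fin n → ZMod p) : aB (ubAut hm v) = 1 := by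
  show (ubF hm v (1, 0)).1 = 1
  show (1 : ZMod (p ^ m)) + qc p m * upc m (∑ j, v j * (0 : Fin n → ZMod p) j) = 1
  have h : (∑ j, v j * (0 : Fin n → ZMod p) j) = 0 := Finset.sum_eq_zero fun j _ => mul_zero _
  rw [h, upc_zero, mul_zero, add_zero]

lemma Theta_ubAut (hm : 2 ≤ m) (v : Fin n → ZMod p) :
    Theta hm (⟨1, ubAut hm v⟩ : HolG p m n)
      = ((⟨Multiplicative.ofAdd v, 1⟩ : TV p n), (1 : TQ p m)) := by
  refine Prod.ext ?_ ?_
  · refine SemidirectProduct.ext ?_ ?_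
    · show Multiplicative.ofAdd (uv hm (ubAut hm v)) = Multiplicative.ofAdd v
      congr 1
      funext i
      show qu m (bB (ubAut hm v) (dI (ubAut hm v) (eV p n i))) = v i
      rw [ubAut_dI hm]
      have hb : bB (ubAut hm v) (eV p n i) = qc p m * upc m (v i) := by
        show (ubF hm v (0, eV p n i)).1 = _
        show (0 : ZMod (p ^ m)) + qc p m * upc m (∑ j, v j * eV p n i j) = _
        rw [sum_single_mul, zero_add]
      rw [hb, qu_qc_upc hm]
    · show EAut hm (ubAut hm v) = 1
      refine MulEquiv.ext fun z => ?_
      show Multiplicative.ofAdd (Em hm (ubAut hm v) z.toAdd) = z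
      have h : Em hm (ubAut hm v) z.toAdd = z.toAdd := by
        funext i
        show sP hm (ubAut hm v) * ∑ j, z.toAdd j * dI (ubAut hm v) (eV p n i) j = z.toAdd i
        rw [show sP hm (ubAut hm v) = 1 from by rw [sP, ubAut_aB hm, map_one]]
        simp only [ubAut_dI hm]
        rw [one_mul, sum_single_mul]
      rw [h]
      rfl
  · refine SemidirectProduct.ext ?_ ?_
    · show Multiplicative.ofAdd (castq m ((0 : GAt p m n).1)) = 1
      rw [show ((0 : GAt p m n).1) = 0 from rfl, map_zero]
      rfl
    · show mAutQ (uA hm (ubAut hm v)) = 1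
      rw [show uA hm (ubAut hm v) = 1 from Units.ext (by
        show castq m (aB (ubAut hm v)) = 1
        rw [ubAut_aB hm, map_one]), mAutQ_one]

/- ## generator 2 : the `GL_n` part -/

def Fm (δ : MulAut (Multiplicative (Fin n → ZMod p))) (z : Fin n → ZMod p) : Fin n → ZMod p :=
  (δ (Multiplicative.ofAdd z)).toAdd

lemma Fm_add (δ : MulAut (Multiplicative (Fin n → ZMod p))) (z z' : Fin n → ZMod p) :
    Fm δ (z + z') = Fm δ z + Fm δ z' := by
  unfold Fm
  rw [← toAdd_mul, ← map_mul]
  rfl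

lemma Fm_mul (δ ε : MulAut (Multiplicative (Fin n → ZMod p))) (z : Fin n → ZMod p) :
    Fm (δ * ε) z = Fm δ (Fm ε z) := rfl

lemma Fm_one (z : Fin n → ZMod p) : Fm (1 : MulAut (Multiplicative (Fin n → ZMod p))) z = z := rfl

def trS (F : (Fin n → ZMod p) → (Fin n → ZMod p)) (z : Fin n → ZMod p) : Fin n → ZMod p :=
  fun k => ∑ i, z i * F (eV p n k) i

lemma sum_single_mul' (y : Fin n → ZMod p) (i : Fin n) :
    ∑ t, eV p n i t * y t = y i := by
  rw [show ∑ t, eV p n i t * y t = ∑ t, y t * eV p n i t from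
    Finset.sum_congr rfl fun t _ => mul_comm _ _]
  exact sum_single_mul y i

lemma trS_comp (F F' : (Fin n → ZMod p) → (Fin n → ZMod p))
    (hF' : ∀ a b, F' (a + b) = F' a + F' b) (z : Fin n → ZMod p) :
    trS F (trS F' z) = trS (fun w => F' (F w)) z := by
  funext k
  show ∑ i, (∑ j, z j * F' (eV p n i) j) * F (eV p n k) i = ∑ i, z i * F' (F (eV p n k)) i
  have hr : ∀ i, F' (F (eV p n k)) i = ∑ t, F (eV p n k) t * F' (eV p n t) i := by
    intro i
    rw [map_expand F' hF' (F (eV p n k))]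
    rw [Finset.sum_apply]
    refine Finset.sum_congr rfl fun t _ => ?_
    rw [Pi.smul_apply, nsmul_eq_mul, ZMod.natCast_val, ZMod.cast_id]
  simp only [hr, Finset.mul_sum, Finset.sum_mul]
  rw [Finset.sum_comm]
  refine Finset.sum_congr rfl fun i _ => Finset.sum_congr rfl fun j _ => by ring

lemma trS_id (z : Fin n → ZMod p) : trS (p := p) (fun w => w) z = z := by
  funext k
  show ∑ i, z i * eV p n k i = z k
  exact sum_single_mul z k

lemma trS_add (F : (Fin n → ZMod p) → (Fin n → ZMod p)) (z z' : Fin n → ZMod p) :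
    trS F (z + z') = trS F z + trS F z' := by
  funext k
  show ∑ i, (z i + z' i) * F (eV p n k) i = (∑ i, z i * F (eV p n k) i) + ∑ i, z' i * F (eV p n k) i
  rw [← Finset.sum_add_distrib]
  exact Finset.sum_congr rfl fun i _ => by ring

def dEq (δ : MulAut (Multiplicative (Fin n → ZMod p))) :
    (Fin n → ZMod p) ≃+ (Fin n → ZMod p) :=
  AddEquiv.mk' ⟨trS (Fm δ⁻¹), trS (Fm δ),
    fun z => by
      rw [trS_comp _ _ (Fm_add δ⁻¹), show (fun w => Fm δ⁻¹ (Fm δ w)) = fun w => w from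
        funext fun w => by rw [← Fm_mul, inv_mul_cancel, Fm_one], trS_id],
    fun z => by
      rw [trS_comp _ _ (Fm_add δ), show (fun w => Fm δ (Fm δ⁻¹ w)) = fun w => w from
        funext fun w => by rw [← Fm_mul, mul_inv_cancel, Fm_one], trS_id]⟩
    (trS_add _)

def phDE (δ : MulAut (Multiplicative (Fin n → ZMod p))) : GAt p m n ≃+ GAt p m n :=
  AddEquiv.prodCongr (AddEquiv.refl _) (dEq δ)

def phDAut (δ : MulAut (Multiplicative (Fin n → ZMod p))) : MulAut (GGt p m n) :=
  AddEquiv.toMultiplicative (phDE δ)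

lemma phDAut_dI (δ : MulAut (Multiplicative (Fin n → ZMod p))) (y : Fin n → ZMod p) :
    dI (phDAut (p := p) (m := m) δ) y = trS (Fm δ) y := by
  show (apA (phDAut δ)⁻¹ (0, y)).2 = _
  rw [show (phDAut (p := p) (m := m) δ)⁻¹ = AddEquiv.toMultiplicative (phDE (p := p) (m := m) δ).symm from toM_inv _]
  rfl

lemma phDAut_aB (δ : MulAut (Multiplicative (Fin n → ZMod p))) :
    aB (phDAut (p := p) (m := m) δ) = 1 := rfl

lemma phDAut_bB (δ : MulAut (Multiplicative (Fin n → ZMod p))) (y : Fin n → ZMod p) :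
    bB (phDAut (p := p) (m := m) δ) y = 0 := rfl

lemma Theta_phDAut (hm : 2 ≤ m) (δ : MulAut (Multiplicative (Fin n → ZMod p))) :
    Theta hm (⟨1, phDAut δ⟩ : HolG p m n)
      = ((⟨1, δ⟩ : TV p n), (1 : TQ p m)) := by
  refine Prod.ext ?_ ?_
  · refine SemidirectProduct.ext ?_ ?_
    · show Multiplicative.ofAdd (uv hm (phDAut δ)) = 1
      rw [show uv hm (phDAut (p := p) (m := m) δ) = 0 from by
        funext i
        show qu m (bB (phDAut δ) (dI (phDAut δ) (eV p n i))) = 0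
        rw [phDAut_bB, qu_zero]]
      rfl
    · show EAut hm (phDAut δ) = δ
      refine MulEquiv.ext fun z => ?_
      show Multiplicative.ofAdd (Em hm (phDAut δ) z.toAdd) = δ z
      have h : Em hm (phDAut δ) z.toAdd = Fm δ z.toAdd := by
        funext i
        show sP hm (phDAut δ) * ∑ j, z.toAdd j * dI (phDAut δ) (eV p n i) j = Fm δ z.toAdd i
        rw [show sP hm (phDAut (p := p) (m := m) δ) = 1 from by rw [sP, phDAut_aB, map_one]]
        simp only [phDAut_dI]
        rw [one_mul]
        have h2 : ∀ j, trS (Fm δ) (eV p n i) j = Fm δ (eV p n j) i := by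
          intro j
          show ∑ t, eV p n i t * Fm δ (eV p n j) t = _
          exact sum_single_mul' (Fm δ (eV p n j)) i
        simp only [h2]
        rw [map_expand (Fm δ) (Fm_add δ) z.toAdd, Finset.sum_apply]
        refine Finset.sum_congr rfl fun j _ => ?_
        rw [Pi.smul_apply, nsmul_eq_mul, ZMod.natCast_val, ZMod.cast_id]
      rw [h]
      rfl
  · refine SemidirectProduct.ext ?_ ?_
    · show Multiplicative.ofAdd (castq m ((0 : GAt p m n).1)) = 1
      rw [show ((0 : GAt p m n).1) = 0 from rfl, map_zero]
      rfl
    · show mAutQ (uA hm (phDAut δ)) = 1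
      rw [show uA hm (phDAut (p := p) (m := m) δ) = 1 from Units.ext (by
        show castq m (aB (phDAut δ)) = 1
        rw [phDAut_aB, map_one]), mAutQ_one]
/- ## generator 3 : scalar part -/

lemma copr (hm : 2 ≤ m) (u : (ZMod (p ^ (m - 1)))ˣ) :
    Nat.Coprime (u : ZMod (p ^ (m - 1))).val (p ^ m) :=
  Nat.Coprime.pow_right m ((ZMod.val_coe_unit_coprime u).coprime_dvd_right (hdvd_p hm))

def aU (hm : 2 ≤ m) (u : (ZMod (p ^ (m - 1)))ˣ) : (ZMod (p ^ m))ˣ :=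
  ZMod.unitOfCoprime _ (copr hm u)

def phAE (hm : 2 ≤ m) (u : (ZMod (p ^ (m - 1)))ˣ) : GAt p m n ≃+ GAt p m n :=
  AddEquiv.prodCongr (AddAut.mulLeft (aU hm u)) (AddEquiv.refl _)

def phAAut (hm : 2 ≤ m) (u : (ZMod (p ^ (m - 1)))ˣ) : MulAut (GGt p m n) :=
  AddEquiv.toMultiplicative (phAE hm u)

lemma phAAut_aB (hm : 2 ≤ m) (u : (ZMod (p ^ (m - 1)))ˣ) :
    aB (phAAut (n := n) hm u) = ((aU hm u : ZMod (p ^ m))) := by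
  show ((aU hm u : ZMod (p ^ m)) * 1, (0 : Fin n → ZMod p)).1 = _
  rw [mul_one]

lemma phAAut_bB (hm : 2 ≤ m) (u : (ZMod (p ^ (m - 1)))ˣ) (y : Fin n → ZMod p) :
    bB (phAAut (n := n) hm u) y = 0 := by
  show ((aU hm u : ZMod (p ^ m)) * 0, y).1 = 0
  rw [mul_zero]

lemma castq_aU (hm : 2 ≤ m) (u : (ZMod (p ^ (m - 1)))ˣ) :
    castq m ((aU hm u : ZMod (p ^ m))) = (u : ZMod (p ^ (m - 1))) := by
  rw [show ((aU hm u : ZMod (p ^ m))) = (((u : ZMod (p ^ (m - 1))).val : ℕ) : ZMod (p ^ m)) from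
    ZMod.coe_unitOfCoprime _ _]
  rw [castq, map_natCast, ZMod.natCast_val, ZMod.cast_id]

lemma Theta_phAAut (hm : 2 ≤ m) (u : (ZMod (p ^ (m - 1)))ˣ) :
    Theta hm (⟨1, phAAut hm u⟩ : HolG p m n)
      = ((⟨1, EAut hm (phAAut hm u)⟩ : TV p n), (⟨1, mAutQ u⟩ : TQ p m)) := by
  refine Prod.ext ?_ ?_
  · refine SemidirectProduct.ext ?_ ?_
    · show Multiplicative.ofAdd (uv hm (phAAut hm u)) = 1
      rw [show uv hm (phAAut (n := n) hm u) = 0 from by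
        funext i
        show qu m (bB (phAAut hm u) (dI (phAAut hm u) (eV p n i))) = 0
        rw [phAAut_bB hm, qu_zero]]
      rfl
    · rfl
  · refine SemidirectProduct.ext ?_ ?_
    · show Multiplicative.ofAdd (castq m ((0 : GAt p m n).1)) = 1
      rw [show ((0 : GAt p m n).1) = 0 from rfl, map_zero]
      rfl
    · show mAutQ (uA hm (phAAut hm u)) = mAutQ u
      rw [show uA hm (phAAut (n := n) hm u) = u from Units.ext (by
        show castq m (aB (phAAut hm u)) = (u : ZMod (p ^ (m - 1)))
        rw [phAAut_aB hm, castq_aU hm])]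

/- ## generator 4 : translation on the cyclic factor -/

lemma Theta_xlift (hm : 2 ≤ m) (gq : Multiplicative (ZMod (p ^ (m - 1)))) :
    Theta hm (⟨Multiplicative.ofAdd (((gq.toAdd.val : ℕ) : ZMod (p ^ m)), 0), 1⟩ : HolG p m n)
      = ((1 : TV p n), (⟨gq, 1⟩ : TQ p m)) := by
  refine Prod.ext ?_ ?_
  · refine SemidirectProduct.ext ?_ ?_
    · show Multiplicative.ofAdd (uv hm (1 : MulAut (GGt p m n))) = 1
      rw [uv_one hm]
      rfl
    · show EAut hm (1 : MulAut (GGt p m n)) = 1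
      exact EAut_one hm
  · refine SemidirectProduct.ext ?_ ?_
    · show Multiplicative.ofAdd (castq m (((gq.toAdd.val : ℕ) : ZMod (p ^ m)))) = gq
      rw [castq, map_natCast, ZMod.natCast_val, ZMod.cast_id]
      rfl
    · show mAutQ (uA hm (1 : MulAut (GGt p m n))) = 1
      rw [show uA hm (1 : MulAut (GGt p m n)) = 1 from Units.ext (by
        show castq m (aB (1 : MulAut (GGt p m n))) = 1
        rw [aB_one, map_one]), mAutQ_one]

/- ## extracting the unit of an automorphism of `Multiplicative (ZMod k)` -/

section SmSec
variable {k : ℕ} [NeZero k]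

def Sm (σ : MulAut (Multiplicative (ZMod k))) (z : ZMod k) : ZMod k :=
  (σ (Multiplicative.ofAdd z)).toAdd

lemma Sm_add (σ : MulAut (Multiplicative (ZMod k))) (z z' : ZMod k) :
    Sm σ (z + z') = Sm σ z + Sm σ z' := by
  unfold Sm
  rw [← toAdd_mul, ← map_mul]
  rfl

lemma Sm_mul (σ τ : MulAut (Multiplicative (ZMod k))) (z : ZMod k) :
    Sm (σ * τ) z = Sm σ (Sm τ z) := rfl

lemma Sm_one (z : ZMod k) : Sm (1 : MulAut (Multiplicative (ZMod k))) z = z := rfl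

lemma Sm_smul (σ : MulAut (Multiplicative (ZMod k))) (z : ZMod k) :
    Sm σ z = z * Sm σ 1 := by
  have h2 : Sm σ (z.val • (1 : ZMod k)) = z.val • Sm σ 1 :=
    (AddMonoidHom.mk' (Sm σ) (Sm_add σ)).map_nsmul z.val 1
  have h1 : z = z.val • (1 : ZMod k) := by
    rw [nsmul_eq_mul, mul_one, ZMod.natCast_val, ZMod.cast_id]
  calc Sm σ z = Sm σ (z.val • (1 : ZMod k)) := by rw [← h1]
    _ = z.val • Sm σ 1 := h2
    _ = z * Sm σ 1 := by rw [nsmul_eq_mul, ZMod.natCast_val, ZMod.cast_id]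

def uOf (σ : MulAut (Multiplicative (ZMod k))) : (ZMod k)ˣ where
  val := Sm σ 1
  inv := Sm σ⁻¹ 1
  val_inv := by
    have h : Sm σ (Sm σ⁻¹ 1) = 1 := by rw [← Sm_mul, mul_inv_cancel, Sm_one]
    rw [Sm_smul σ] at h
    rw [mul_comm]
    exact h
  inv_val := by
    have h : Sm σ (Sm σ⁻¹ 1) = 1 := by rw [← Sm_mul, mul_inv_cancel, Sm_one]
    rw [Sm_smul σ] at h
    exact h

lemma sigma_eq_mAutQ (σ : MulAut (Multiplicative (ZMod k))) : σ = mAutQ (uOf σ) := by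
  refine MulEquiv.ext fun z => ?_
  show Multiplicative.ofAdd (Sm σ z.toAdd) = Multiplicative.ofAdd ((uOf σ : ZMod k) * z.toAdd)
  rw [Sm_smul σ]
  rw [show (uOf σ : ZMod k) = Sm σ 1 from rfl, mul_comm]

end SmSec

/- ## surjectivity -/

lemma Theta_surjective (hm : 2 ≤ m) : Function.Surjective (Theta (p := p) (n := n) hm) := by
  rintro ⟨T1, T2⟩
  obtain ⟨gv, δ⟩ := T1
  obtain ⟨gq, σ⟩ := T2
  haveI : NeZero (p ^ (m - 1)) := ⟨pow_ne_zero _ hp.out.ne_zero⟩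
  set u : (ZMod (p ^ (m - 1)))ˣ := uOf σ with hu
  set EA : MulAut (Multiplicative (Fin n → ZMod p)) := EAut hm (phAAut (n := n) hm u) with hEA
  refine ⟨(⟨1, ubAut hm gv.toAdd⟩ : HolG p m n) * (⟨1, phDAut (δ * EA⁻¹)⟩ : HolG p m n)
    * (⟨Multiplicative.ofAdd (((gq.toAdd.val : ℕ) : ZMod (p ^ m)), 0), 1⟩ : HolG p m n)
    * (⟨1, phAAut hm u⟩ : HolG p m n), ?_⟩
  erw [map_mul, map_mul, map_mul]
  rw [Theta_ubAut hm, Theta_phDAut hm, Theta_xlift hm, Theta_phAAut hm]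
  refine Prod.ext ?_ ?_
  · show (⟨Multiplicative.ofAdd gv.toAdd, 1⟩ * ⟨1, δ * EA⁻¹⟩ * 1 * ⟨1, EA⟩ : TV p n) = ⟨gv, δ⟩
    rw [mul_one]
    refine SemidirectProduct.ext ?_ ?_
    · show Multiplicative.ofAdd gv.toAdd * (1 : MulAut (Multiplicative (Fin n → ZMod p))) 1
        * ((1 : MulAut (Multiplicative (Fin n → ZMod p))) * (δ * EA⁻¹)) 1 = gv
      rw [map_one, map_one, mul_one, mul_one]
      rfl
    · show 1 * (δ * EA⁻¹) * EA = δ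
      rw [one_mul, inv_mul_cancel_right]
  · show ((1 : TQ p m) * 1 * ⟨gq, 1⟩ * ⟨1, mAutQ u⟩ : TQ p m) = ⟨gq, σ⟩
    erw [one_mul, one_mul]
    refine SemidirectProduct.ext ?_ ?_
    · show gq * (1 : MulAut (Multiplicative (ZMod (p ^ (m - 1))))) 1 = gq
      rw [map_one, mul_one]
    · show 1 * mAutQ u = σ
      rw [one_mul, hu]
      exact (sigma_eq_mAutQ σ).symm
lemma ker_eq_range (hm : 2 ≤ m) :
    (Theta (p := p) (n := n) hm).ker = (Phi hm).range :=
  le_antisymm (ker_le_range hm) (range_le_ker hm)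

lemma finrank_WWt : Module.finrank (ZMod p) (WWt p n)
    = Module.finrank (ZMod p) (Fin (2 * (n + 1)) → ZMod p) := by
  rw [Module.finrank_prod, Module.finrank_prod, Module.finrank_pi, Module.finrank_pi,
    Module.finrank_self, Fintype.card_fin, Fintype.card_fin]
  ring

noncomputable def kerIso (hm : 2 ≤ m) :
    (Theta (p := p) (n := n) hm).ker ≃* Multiplicative (Fin (2 * (n + 1)) → ZMod p) := by
  have h3 : Multiplicative (WWt p n) ≃* Multiplicative (Fin (2 * (n + 1)) → ZMod p) := by
    have := FiniteDimensional.nonempty_linearEquiv_of_finrank_eq (finrank_WWt (p := p) (n := n))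
    exact AddEquiv.toMultiplicative this.some.toAddEquiv
  exact ((MulEquiv.subgroupCongr (ker_eq_range hm)).trans
    (MonoidHom.ofInjective (Phi_injective hm)).symm).trans h3

noncomputable def quotIso (hm : 2 ≤ m) :
    HolG p m n ⧸ (Theta (p := p) (n := n) hm).ker ≃* TV p n × TQ p m :=
  QuotientGroup.quotientKerEquivOfSurjective _ (Theta_surjective hm)

end HolStruct

/-- For an odd prime `p`, `m ≥ 2` and `n ≥ 1`, the holomorph `Hol(C_{p^m} × (C_p)^n)` has
a normal subgroup `N` isomorphic to the elementary abelian group `(C_p)^(2(n+1))` such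
that the quotient is isomorphic to `Hol((C_p)^n) × Hol(C_{p^(m-1)})`. -/
theorem hol_zmod_p_pow_mul_elementary_structure (p m n : ℕ) [Fact p.Prime] (hodd : Odd p)
    (hm : 2 ≤ m) (hn : 1 ≤ n) :
    ∃ (N : Subgroup (Hol (Multiplicative (ZMod (p ^ m) × (Fin n → ZMod p))))) (hN : N.Normal),
      Nonempty (N ≃* Multiplicative (Fin (2 * (n + 1)) → ZMod p)) ∧
      Nonempty (letI := hN;
        (Hol (Multiplicative (ZMod (p ^ m) × (Fin n → ZMod p))) ⧸ N) ≃*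
          Hol (Multiplicative (Fin n → ZMod p)) × Hol (Multiplicative (ZMod (p ^ (m - 1))))) := by
  refine ⟨(HolStruct.Theta (p := p) (m := m) (n := n) hm).ker, inferInstance, ⟨?_⟩, ⟨?_⟩⟩
  · exact HolStruct.kerIso hm
  · exact HolStruct.quotIso hm
end

section
/- For every n ≥ 2, the holomorph Hol(C_{3^n} × C_3) has a normal subgroup N isomorphic to the elementary abelian group (C_3)^4 such that the quotient Hol(C_{3^n} × C_3)/N is isomorphic to Hol(C_3) × Hol(C_{3^{n-1}}). -/
open Multiplicative

def unitsToMulAut (A : Type*) [Ring A] : Aˣ →* MulAut (Multiplicative A) :=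
  (MulAutMultiplicative A).symm.toMonoidHom.comp AddAut.mulLeft

@[simp] lemma unitsToMulAut_apply {A : Type*} [Ring A] (u : Aˣ) (x : Multiplicative A) :
    unitsToMulAut A u x = ofAdd (u * toAdd x) := rfl

lemma unitsToMulAut_injective (A : Type*) [Ring A] : Function.Injective (unitsToMulAut A) := by
  intro u v h
  have := congrArg (fun e : MulAut (Multiplicative A) => toAdd (e (ofAdd 1))) h
  exact Units.ext (by simpa using this)

lemma unitsToMulAut_surjective (n : ℕ) : Function.Surjective (unitsToMulAut (ZMod n)) := by
  intro e
  set f := toAdd (MulAutMultiplicative _ e)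
  refine ⟨Additive.toMul (ZMod.AddAutEquivUnits n f), MulEquiv.ext fun x => ?_⟩
  have := DFunLike.congr_fun ((ZMod.AddAutEquivUnits n).symm_apply_apply f) (toAdd x)
  simp only [ZMod.AddAutEquivUnits_apply, unitsToMulAut_apply] at this ⊢
  exact this

namespace Hol

def rightHom (G : Type*) [Group G] : Hol G →* MulAut G := SemidirectProduct.rightHom

variable {K A : Type*} [Group K] [Ring A] (ε : K →* Aˣ) (τ : K → A)
  (hτ : ∀ g h, τ (g * h) = τ g + ε g * τ h)

def liftAffine : K →* Hol (Multiplicative A) where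
  toFun g := ⟨ofAdd (τ g), unitsToMulAut A (ε g)⟩
  map_one' := by
    have h1 := hτ 1 1
    simp only [mul_one, map_one, Units.val_one, one_mul, left_eq_add] at h1
    exact SemidirectProduct.ext (congrArg ofAdd h1) (show unitsToMulAut A (ε 1) = 1 by simp)
  map_mul' g h :=
    SemidirectProduct.ext (by rw [hτ]; rfl) (by rw [map_mul, map_mul]; rfl)

lemma liftAffine_eq_one_iff (g : K) : liftAffine ε τ hτ g = 1 ↔ τ g = 0 ∧ ε g = 1 := by
  refine SemidirectProduct.ext_iff.trans ?_
  rw [← (unitsToMulAut_injective A).eq_iff, map_one]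
  exact and_congr ofAdd_eq_one Iff.rfl

end Hol

namespace ZModPowProd

variable {p k : ℕ}

local notation "R" => ZMod (p ^ (k + 1))
local notation "S" => ZMod (p ^ k)
local notation "F" => ZMod p
local notation "G" => Multiplicative (ZMod (p ^ (k + 1)) × ZMod p)

section Arithmetic

def castPow : R →+* S := ZMod.castHom (pow_dvd_pow p k.le_succ) S

def castPrime : R →+* F := ZMod.castHom (dvd_pow_self p k.succ_ne_zero) F

lemma castHom_castPow (hk : k ≠ 0) (x : R) :
    ZMod.castHom (dvd_pow_self p hk) F (castPow x) = castPrime x :=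
  RingHom.congr_fun
    (RingHom.ext_zmod ((ZMod.castHom (dvd_pow_self p hk) F).comp castPow) castPrime) x

lemma natCast_mod_mul_pow (u : ℕ) : (((u % p) * p ^ k : ℕ) : R) = ((u * p ^ k : ℕ) : R) := by
  have h : ((p ^ (k + 1) : ℕ) : R) = 0 := ZMod.natCast_self _
  conv_rhs => rw [← Nat.mod_add_div u p]
  push_cast at h ⊢
  linear_combination (-((u / p : ℕ) : R)) * h

variable [NeZero p]

lemma castPow_apply (x : R) : castPow x = (x.val : S) := by
  rw [castPow, ZMod.castHom_apply, ZMod.cast_eq_val]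

lemma castPrime_apply (x : R) : castPrime x = (x.val : F) := by
  rw [castPrime, ZMod.castHom_apply, ZMod.cast_eq_val]

lemma castPow_eq_zero_iff (x : R) : castPow x = 0 ↔ p ^ k ∣ x.val := by
  rw [castPow_apply, ZMod.natCast_eq_zero_iff]

lemma castPow_eq_zero_of_nsmul_eq_zero {x : R} (h : p • x = 0) :
    castPow x = 0 := by
  rw [← ZMod.natCast_zmod_val x, nsmul_eq_mul, ← Nat.cast_mul, ZMod.natCast_eq_zero_iff] at h
  exact (castPow_eq_zero_iff x).2
    (Nat.dvd_of_mul_dvd_mul_left (NeZero.pos p) ((pow_succ' p k).symm.dvd.trans h))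

variable (k) in
def mulPow : F →+ R where
  toFun t := ((t.val * p ^ k : ℕ) : R)
  map_zero' := by simp
  map_add' s t := by
    rw [ZMod.val_add, natCast_mod_mul_pow]
    push_cast
    ring

lemma mulPow_apply (t : F) : mulPow k t = ((t.val * p ^ k : ℕ) : R) := rfl

lemma mulPow_natCast (u : ℕ) : mulPow k (u : F) = ((u * p ^ k : ℕ) : R) := by
  rw [mulPow_apply, ZMod.val_natCast, natCast_mod_mul_pow]

lemma val_mulPow (t : F) : (mulPow k t).val = t.val * p ^ k := by
  rw [mulPow_apply, ZMod.val_natCast, Nat.mod_eq_of_lt]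
  calc t.val * p ^ k < p * p ^ k := Nat.mul_lt_mul_of_pos_right t.val_lt (NeZero.pos _)
    _ = p ^ (k + 1) := (pow_succ' p k).symm

lemma castPow_mulPow (t : F) : castPow (mulPow k t) = 0 := by
  rw [castPow_eq_zero_iff, val_mulPow]
  exact dvd_mul_left _ _

lemma castPrime_mulPow (hk : k ≠ 0) (t : F) : castPrime (mulPow k t) = 0 := by
  rw [← castHom_castPow hk, castPow_mulPow, map_zero]

lemma mulPow_mul_mulPow (hk : k ≠ 0) (s t : F) : mulPow k s * mulPow k t = 0 := by
  rw [mulPow_apply, mulPow_apply, ← Nat.cast_mul, ZMod.natCast_eq_zero_iff]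
  calc p ^ (k + 1) ∣ p ^ k * p ^ k := by rw [← pow_add]; exact pow_dvd_pow p (by omega)
    _ ∣ s.val * p ^ k * (t.val * p ^ k) := mul_dvd_mul (dvd_mul_left _ _) (dvd_mul_left _ _)

lemma mul_mulPow (x : R) (t : F) : x * mulPow k t = mulPow k (castPrime x * t) := by
  obtain ⟨u, rfl⟩ := ZMod.natCast_zmod_surjective t
  obtain ⟨v, rfl⟩ := ZMod.natCast_zmod_surjective x
  rw [mulPow_natCast, map_natCast castPrime, ← (Nat.cast_mul v u : ((v * u : ℕ) : F) = _),
    mulPow_natCast]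
  push_cast
  ring

def divPow (x : R) : F := ((x.val / p ^ k : ℕ) : F)

lemma divPow_mulPow (t : F) : divPow (mulPow k t) = t := by
  rw [divPow, val_mulPow, Nat.mul_div_cancel _ (NeZero.pos _), ZMod.natCast_zmod_val]

lemma mulPow_divPow {x : R} (h : castPow x = 0) : mulPow k (divPow x) = x := by
  obtain ⟨q, hq⟩ := (castPow_eq_zero_iff x).1 h
  rw [divPow, hq, Nat.mul_div_cancel_left _ (NeZero.pos _), mulPow_natCast, mul_comm, ← hq,
    ZMod.natCast_zmod_val]

lemma mulPow_injective : Function.Injective (mulPow (p := p) k) :=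
  Function.LeftInverse.injective (divPow_mulPow (k := k))

end Arithmetic

section Automorphisms

-- Every automorphism of `R × F` is `(x, y) ↦ (a x + p ^ k b y, c x + d y)`
-- (`apply_ofAdd_eq_matrixHom`); `autA`, ..., `autD` read off `a, b, c, d`.
def autA (α : MulAut G) : R := (toAdd (α (ofAdd (1, 0)))).1

def autC (α : MulAut G) : F := (toAdd (α (ofAdd (1, 0)))).2

def autD (α : MulAut G) : F := (toAdd (α (ofAdd (0, 1)))).2

@[simp] lemma autA_one : autA (1 : MulAut G) = 1 := rfl

@[simp] lemma autC_one : autC (1 : MulAut G) = 0 := rfl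

variable [NeZero p]

def autB (α : MulAut G) : F := divPow (toAdd (α (ofAdd (0, 1)))).1

def matrixHom (a : R) (b c d : F) : R × F →+ R × F where
  toFun v := (a * v.1 + mulPow k (b * v.2), c * castPrime v.1 + d * v.2)
  map_zero' := by simp
  map_add' v w := by ext <;> simp only [Prod.fst_add, Prod.snd_add, map_add, mul_add] <;> abel

@[simp] lemma matrixHom_apply (a : R) (b c d : F) (v : R × F) :
    matrixHom a b c d v = (a * v.1 + mulPow k (b * v.2), c * castPrime v.1 + d * v.2) := rfl

lemma apply_ofAdd_eq_matrixHom (α : MulAut G) (v : R × F) :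
    α (ofAdd v) = ofAdd (matrixHom (autA α) (autB α) (autC α) (autD α) v) := by
  have h_torsion : p • toAdd (α (ofAdd (0, 1))) = 0 := by
    rw [← toAdd_pow, ← map_pow, ← ofAdd_nsmul]
    simp
  have h_fst : (toAdd (α (ofAdd (0, 1)))).1 = mulPow k (autB α) :=
    (mulPow_divPow (castPow_eq_zero_of_nsmul_eq_zero (congrArg Prod.fst h_torsion))).symm
  have hv : v = v.1.val • ((1, 0) : R × F) + v.2.val • (0, 1) := by ext <;> simp
  conv_lhs => rw [hv, ofAdd_add, map_mul, ofAdd_nsmul, ofAdd_nsmul, map_pow, map_pow]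
  apply toAdd.injective
  ext
  · simp only [toAdd_mul, toAdd_pow, Prod.fst_add, Prod.smul_fst, toAdd_ofAdd, matrixHom_apply]
    rw [h_fst, ← map_nsmul, nsmul_eq_mul, nsmul_eq_mul, ZMod.natCast_zmod_val,
      ZMod.natCast_zmod_val, mul_comm, mul_comm v.2, autA]
  · simp only [toAdd_mul, toAdd_pow, Prod.snd_add, Prod.smul_snd, toAdd_ofAdd, matrixHom_apply]
    rw [nsmul_eq_mul, nsmul_eq_mul, ZMod.natCast_zmod_val, castPrime_apply, mul_comm,
      mul_comm v.2, autC, autD]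

lemma apply_ofAdd_zero_one (α : MulAut G) :
    α (ofAdd (0, 1)) = ofAdd (mulPow k (autB α), autD α) := by
  rw [apply_ofAdd_eq_matrixHom]
  simp

lemma ext_of_entries {α β : MulAut G} (hA : autA α = autA β) (hB : autB α = autB β)
    (hC : autC α = autC β) (hD : autD α = autD β) : α = β :=
  MulEquiv.ext fun g => by
    rw [← ofAdd_toAdd g, apply_ofAdd_eq_matrixHom, apply_ofAdd_eq_matrixHom, hA, hB, hC, hD]

lemma castPow_fst_apply (α : MulAut G) (g : G) :
    castPow (toAdd (α g)).1 = castPow (autA α) * castPow (toAdd g).1 := by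
  rw [← ofAdd_toAdd g, apply_ofAdd_eq_matrixHom]
  simp [castPow_mulPow]

lemma autB_mul (α β : MulAut G) :
    autB (α * β) = castPrime (autA α) * autB β + autB α * autD β := by
  rw [autB, MulAut.mul_apply, apply_ofAdd_zero_one, apply_ofAdd_eq_matrixHom]
  simp only [toAdd_ofAdd, matrixHom_apply, mul_mulPow, ← map_add, divPow_mulPow]

lemma autD_mul (hk : k ≠ 0) (α β : MulAut G) : autD (α * β) = autD α * autD β := by
  rw [autD, MulAut.mul_apply, apply_ofAdd_zero_one, apply_ofAdd_eq_matrixHom]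
  simp [castPrime_mulPow hk]

lemma matrixHom_injective (hk : k ≠ 0) (a : Rˣ) (b c : F) (d : Fˣ) :
    Function.Injective (matrixHom (a : R) b c d) := by
  rw [injective_iff_map_eq_zero]
  rintro ⟨x, y⟩ h
  obtain ⟨h₁, h₂⟩ := Prod.mk_eq_zero.1 h
  dsimp only at h₁ h₂
  have hx' : castPrime x = 0 := by
    have := congrArg castPrime h₁
    rw [map_add, map_mul, castPrime_mulPow hk, add_zero, map_zero] at this
    exact ((a.isUnit.map castPrime).mul_right_eq_zero).1 this
  have hy : y = 0 := by
    rw [hx', mul_zero, zero_add] at h₂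
    exact d.isUnit.mul_right_eq_zero.1 h₂
  rw [hy, mul_zero, map_zero, add_zero] at h₁
  rw [a.isUnit.mul_right_eq_zero.1 h₁, hy, Prod.mk_zero_zero]

noncomputable def matrixAut (hk : k ≠ 0) (a : Rˣ) (b c : F) (d : Fˣ) : MulAut G :=
  MulEquiv.ofBijective (AddMonoidHom.toMultiplicative (matrixHom (a : R) b c d))
    (Finite.injective_iff_bijective.1 (matrixHom_injective hk a b c d))

lemma matrixAut_apply (hk : k ≠ 0) (a : Rˣ) (b c : F) (d : Fˣ) (g : G) :
    matrixAut hk a b c d g = ofAdd (matrixHom (a : R) b c d (toAdd g)) := rfl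

@[simp] lemma autA_matrixAut (hk : k ≠ 0) (a : Rˣ) (b c : F) (d : Fˣ) :
    autA (matrixAut hk a b c d) = a := by
  simp [autA, matrixAut_apply]

@[simp] lemma autB_matrixAut (hk : k ≠ 0) (a : Rˣ) (b c : F) (d : Fˣ) :
    autB (matrixAut hk a b c d) = b := by
  simp [autB, matrixAut_apply, divPow_mulPow]

@[simp] lemma autC_matrixAut (hk : k ≠ 0) (a : Rˣ) (b c : F) (d : Fˣ) :
    autC (matrixAut hk a b c d) = c := by
  simp [autC, matrixAut_apply]

@[simp] lemma autD_matrixAut (hk : k ≠ 0) (a : Rˣ) (b c : F) (d : Fˣ) :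
    autD (matrixAut hk a b c d) = d := by
  simp [autD, matrixAut_apply]

lemma isUnit_one_add_mulPow (hk : k ≠ 0) (t : F) : IsUnit (1 + mulPow k t) :=
  IsNilpotent.isUnit_one_add ⟨2, by rw [sq, mulPow_mul_mulPow hk]⟩

noncomputable def kerAut (hk : k ≠ 0) (t c : F) : MulAut G :=
  matrixAut hk (isUnit_one_add_mulPow hk t).unit 0 c 1

lemma kerAut_apply (hk : k ≠ 0) (t c : F) (g : G) :
    kerAut hk t c g = ofAdd (matrixHom (1 + mulPow k t) 0 c 1 (toAdd g)) := rfl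

lemma kerAut_mul (hk : k ≠ 0) (s c t e : F) :
    kerAut hk s c * kerAut hk t e = kerAut hk (s + t) (c + e) := by
  refine MulEquiv.ext fun g => ?_
  simp only [MulAut.mul_apply, kerAut_apply, toAdd_ofAdd, matrixHom_apply]
  congr 1
  ext
  · simp only [zero_mul, map_zero, add_zero, one_mul, map_add]
    linear_combination (toAdd g).1 * mulPow_mul_mulPow hk s t
  · simp only [zero_mul, map_zero, add_zero, map_mul, map_add, map_one, castPrime_mulPow hk,
      one_mul]
    ring

lemma kerAut_zero (hk : k ≠ 0) : kerAut hk 0 0 = (1 : MulAut G) := by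
  refine MulEquiv.ext fun g => ?_
  simp [kerAut_apply]

lemma kerAut_apply_mulPow (hk : k ≠ 0) (t c s y : F) :
    kerAut hk t c (ofAdd (mulPow k s, y)) = ofAdd (mulPow k s, y) := by
  simp [kerAut_apply, castPrime_mulPow hk, add_mul, mulPow_mul_mulPow hk]

end Automorphisms

variable [NeZero p]

def autAUnits : MulAut G →* Sˣ := MonoidHom.toHomUnits
  { toFun α := castPow (autA α)
    map_one' := map_one castPow
    map_mul' α β := by rw [autA, MulAut.mul_apply, castPow_fst_apply]; rfl }

def autDUnits (hk : k ≠ 0) : MulAut G →* Fˣ := MonoidHom.toHomUnits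
  { toFun := autD
    map_one' := rfl
    map_mul' := autD_mul hk }

@[simp] lemma val_autAUnits (α : MulAut G) : (autAUnits α : S) = castPow (autA α) := rfl

@[simp] lemma val_autDUnits (hk : k ≠ 0) (α : MulAut G) : (autDUnits hk α : F) = autD α := rfl

-- `α` permutes the lines of the `p`-torsion `p ^ k R × F ≅ F²` other than `p ^ k R × 0`;
-- labelling the line through `(p ^ k z, 1)` by `z`, it acts by `z ↦ (ā z + b) / d`.
def lineScale (hk : k ≠ 0) : MulAut G →* Fˣ :=
  (Units.map (ZMod.castHom (dvd_pow_self p hk) F : S →* F)).comp autAUnits * (autDUnits hk)⁻¹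

def lineShift (hk : k ≠ 0) (α : MulAut G) : F := autB α * ↑(autDUnits hk α)⁻¹

lemma val_lineScale (hk : k ≠ 0) (α : MulAut G) :
    (lineScale hk α : F) = castPrime (autA α) * ↑(autDUnits hk α)⁻¹ := by
  simp [lineScale, ← castHom_castPow hk]

lemma lineShift_mul (hk : k ≠ 0) (α β : MulAut G) :
    lineShift hk (α * β) = lineShift hk α + lineScale hk α * lineShift hk β := by
  have hβ : autD β * ↑(autDUnits hk β)⁻¹ = 1 := (autDUnits hk β).mul_inv
  simp only [lineShift, val_lineScale, map_mul, mul_inv_rev, Units.val_mul, autB_mul]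
  linear_combination (autB α * ↑(autDUnits hk α)⁻¹) * hβ

def lineAction (hk : k ≠ 0) : MulAut G →* Hol (Multiplicative F) :=
  Hol.liftAffine (lineScale hk) (lineShift hk) (lineShift_mul hk)

def holReduce : Hol G →* Hol (Multiplicative S) :=
  SemidirectProduct.map
    (AddMonoidHom.toMultiplicative (castPow.toAddMonoidHom.comp (AddMonoidHom.fst R F)))
    ((unitsToMulAut S).comp autAUnits) fun α => by
      ext g
      simp [castPow_fst_apply]

variable (p) in
def holProj (hk : k ≠ 0) : Hol G →* Hol (Multiplicative F) × Hol (Multiplicative S) :=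
  ((lineAction hk).comp (Hol.rightHom G)).prod holReduce

variable (p) in
noncomputable def kernelParam (hk : k ≠ 0) : Multiplicative (Fin 4 → F) →* Hol G where
  toFun v := ⟨ofAdd (mulPow k (toAdd v 0), toAdd v 1), kerAut hk (toAdd v 2) (toAdd v 3)⟩
  map_one' := SemidirectProduct.ext (by simp only [toAdd_one, Pi.zero_apply, map_zero]; rfl)
    (kerAut_zero hk)
  map_mul' v w := SemidirectProduct.ext
    (by
      change _ = _ * kerAut hk _ _ _
      rw [kerAut_apply_mulPow, ← ofAdd_add]
      simp)
    (kerAut_mul hk _ _ _ _).symm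

lemma kernelParam_injective (hk : k ≠ 0) : Function.Injective (kernelParam p hk) := by
  rw [injective_iff_map_eq_one]
  intro v hv
  obtain ⟨h_left, h_right⟩ := SemidirectProduct.ext_iff.1 hv
  change ofAdd (mulPow k (toAdd v 0), toAdd v 1) = 1 at h_left
  change kerAut hk (toAdd v 2) (toAdd v 3) = 1 at h_right
  obtain ⟨h0, h1⟩ := Prod.mk_eq_zero.1 (ofAdd_eq_one.1 h_left)
  have h2 : mulPow k (toAdd v 2) = 0 := by
    simpa [kerAut] using congrArg autA h_right
  have h3 : toAdd v 3 = 0 := by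
    simpa [kerAut] using congrArg autC h_right
  apply toAdd.injective
  funext i
  fin_cases i
  · exact (map_eq_zero_iff _ mulPow_injective).1 h0
  · exact h1
  · exact (map_eq_zero_iff _ mulPow_injective).1 h2
  · exact h3

lemma lineAction_eq_one_iff (hk : k ≠ 0) {α : MulAut G} (ha : castPow (autA α) = 1) :
    lineAction hk α = 1 ↔ autB α = 0 ∧ autD α = 1 := by
  rw [lineAction, Hol.liftAffine_eq_one_iff, lineShift, Units.mul_left_eq_zero, Units.ext_iff,
    val_lineScale, ← castHom_castPow hk, ha, map_one, one_mul, Units.val_inj, inv_eq_one,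
    Units.ext_iff, val_autDUnits, Units.val_one]

lemma holReduce_eq_one_iff (x : Hol G) :
    holReduce x = 1 ↔ castPow (toAdd x.left).1 = 0 ∧ castPow (autA x.right) = 1 := by
  refine SemidirectProduct.ext_iff.trans (and_congr ofAdd_eq_one ?_)
  change unitsToMulAut S (autAUnits x.right) = 1 ↔ _
  rw [← map_one (unitsToMulAut S), (unitsToMulAut_injective S).eq_iff, Units.ext_iff]
  rfl

lemma mem_ker_holProj (hk : k ≠ 0) (x : Hol G) :
    x ∈ (holProj p hk).ker ↔ castPow (toAdd x.left).1 = 0 ∧ castPow (autA x.right) = 1 ∧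
      autB x.right = 0 ∧ autD x.right = 1 := by
  rw [holProj, MonoidHom.ker_prod, Subgroup.mem_inf, MonoidHom.mem_ker, MonoidHom.mem_ker,
    holReduce_eq_one_iff, MonoidHom.comp_apply]
  change lineAction hk x.right = 1 ∧ _ ↔ _
  constructor
  · rintro ⟨h, hx, ha⟩
    exact ⟨hx, ha, (lineAction_eq_one_iff hk ha).1 h⟩
  · rintro ⟨hx, ha, h⟩
    exact ⟨(lineAction_eq_one_iff hk ha).2 h, hx, ha⟩

lemma range_kernelParam (hk : k ≠ 0) : (kernelParam p hk).range = (holProj p hk).ker := by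
  ext x
  rw [MonoidHom.mem_range, mem_ker_holProj]
  constructor
  · rintro ⟨v, rfl⟩
    change castPow (mulPow k (toAdd v 0)) = 0 ∧ castPow (autA (kerAut hk _ _)) = 1 ∧
      autB (kerAut hk _ _) = 0 ∧ autD (kerAut hk _ _) = 1
    simp [kerAut, castPow_mulPow]
  · rintro ⟨hx, ha, hb, hd⟩
    have ha' : castPow (autA x.right - 1) = 0 := by rw [map_sub, ha, map_one, sub_self]
    refine ⟨ofAdd ![divPow (toAdd x.left).1, (toAdd x.left).2, divPow (autA x.right - 1),
      autC x.right], SemidirectProduct.ext ?_ ?_⟩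
    · change ofAdd (mulPow k (divPow (toAdd x.left).1), (toAdd x.left).2) = x.left
      rw [mulPow_divPow hx]
      rfl
    · change kerAut hk (divPow (autA x.right - 1)) (autC x.right) = x.right
      refine ext_of_entries ?_ ?_ ?_ ?_ <;> simp [kerAut, mulPow_divPow ha', hb, hd]

lemma holProj_surjective (hk : k ≠ 0) : Function.Surjective (holProj p hk) := by
  rintro ⟨⟨g₁, e₁⟩, ⟨g₂, e₂⟩⟩
  obtain ⟨e, rfl⟩ := unitsToMulAut_surjective p e₁
  obtain ⟨f, rfl⟩ := unitsToMulAut_surjective (p ^ k) e₂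
  obtain ⟨a, rfl⟩ := ZMod.unitsMap_surjective (m := p ^ (k + 1)) (pow_dvd_pow p k.le_succ) f
  -- chosen so that the preimage below has `ā / d = e` and `b / d = g₁`
  set d : Fˣ := Units.map castPrime.toMonoidHom a * e⁻¹
  refine ⟨⟨ofAdd (((toAdd g₂).val : R), 0), matrixAut hk a (toAdd g₁ * d) 0 d⟩, ?_⟩
  have hD : autDUnits hk (matrixAut hk a (toAdd g₁ * d) 0 d) = d :=
    Units.ext (autD_matrixAut hk a (toAdd g₁ * d) 0 d)
  refine Prod.ext (SemidirectProduct.ext ?_ ?_) (SemidirectProduct.ext ?_ ?_)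
  · change ofAdd (lineShift hk (matrixAut hk a (toAdd g₁ * d) 0 d)) = g₁
    rw [lineShift, hD, autB_matrixAut, mul_assoc, Units.mul_inv, mul_one, ofAdd_toAdd]
  · change unitsToMulAut F (lineScale hk (matrixAut hk a (toAdd g₁ * d) 0 d)) = _
    refine congrArg _ (Units.ext ?_)
    rw [val_lineScale, hD, autA_matrixAut]
    change ((Units.map castPrime.toMonoidHom a * d⁻¹ : Fˣ) : F) = e
    simp [d]
  · change ofAdd (castPow ((toAdd g₂).val : R)) = g₂
    rw [map_natCast, ZMod.natCast_zmod_val, ofAdd_toAdd]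
  · change unitsToMulAut S (autAUnits (matrixAut hk a (toAdd g₁ * d) 0 d)) = _
    exact congrArg _ (Units.ext (by rw [val_autAUnits, autA_matrixAut]; rfl))

theorem exists_normal_elementaryAbelian_quotient_hol_prod (hk : k ≠ 0) :
    ∃ (N : Subgroup (Hol G)) (hN : N.Normal), Nonempty (N ≃* Multiplicative (Fin 4 → F)) ∧
      Nonempty (letI := hN; Hol G ⧸ N ≃* Hol (Multiplicative F) × Hol (Multiplicative S)) :=
  ⟨_, (holProj p hk).normal_ker,
    ⟨((MonoidHom.ofInjective (kernelParam_injective hk)).trans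
      (MulEquiv.subgroupCongr (range_kernelParam hk))).symm⟩,
    ⟨QuotientGroup.quotientKerEquivOfSurjective _ (holProj_surjective hk)⟩⟩

end ZModPowProd

/-- For `n ≥ 2`, the holomorph `Hol(C_{3^n} × C_3)` has a normal subgroup `N` isomorphic
to the elementary abelian group `(C_3)^4` such that the quotient is isomorphic to
`Hol(C_3) × Hol(C_{3^(n-1)})`. -/
theorem hol_zmod_three_pow_mul_three_structure (n : ℕ) (hn : 2 ≤ n) :
    ∃ (N : Subgroup (Hol (Multiplicative (ZMod (3 ^ n) × ZMod 3)))) (hN : N.Normal),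
      Nonempty (N ≃* Multiplicative (Fin 4 → ZMod 3)) ∧
      Nonempty (letI := hN;
        (Hol (Multiplicative (ZMod (3 ^ n) × ZMod 3)) ⧸ N) ≃*
          Hol (Multiplicative (ZMod 3)) × Hol (Multiplicative (ZMod (3 ^ (n - 1))))) := by
  obtain ⟨k, rfl⟩ : ∃ k, n = k + 1 := ⟨n - 1, by omega⟩
  rw [Nat.add_sub_cancel]
  exact ZModPowProd.exists_normal_elementaryAbelian_quotient_hol_prod (by omega)
end
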